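/- arXiv:1902.03723 — 3 statements merged into one kernel-verified Lean document; each statement's English description precedes it below -/
import Mathlib

section
/- On ℝ² with the Grushin gradient ∇_X f = (∂f/∂x₁, x₁ ∂f/∂x₂), let d ∈ ℝ and Ω⁺ = {x ∈ ℝ² : x₂ > d}. Then for every p > 1 and every f ∈ C₀^∞(Ω⁺): ∫_{Ω⁺} |∇_X f(x)|^p dx ≥ ((p−1)/p)^p ∫_{Ω⁺} ( |x₁|^p / |x₂ − d|^p ) |f(x)|^p dx. -/
open MeasureTheory Real

/-- The Grushin vector field `X₁ f = ∂f/∂x₁` on `ℝ²`. -/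
noncomputable def X1G (f : (Fin 2 → ℝ) → ℝ) (x : Fin 2 → ℝ) : ℝ :=
  fderiv ℝ f x ![1, 0]

/-- The Grushin vector field `X₂ f = x₁ ∂f/∂x₂` on `ℝ²`. -/
noncomputable def X2G (f : (Fin 2 → ℝ) → ℝ) (x : Fin 2 → ℝ) : ℝ :=
  fderiv ℝ f x ![0, x 0]

/-!
On the vertical line `x₁ = s` the Grushin field `X₂` is `s ∂/∂x₂`, so
`|∇_X f|^p ≥ |X₂ f|^p = |s|^p |∂₂ f|^p`, and by Fubini the inequality reduces to the
one-dimensional Hardy inequality `∫ |g'|^p ≥ ((p-1)/p)^p ∫ |g|^p / (t-d)^p` for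
`g ∈ C¹_c((d, ∞))`.
For that one, integrating by parts against `(t-d)^(1-p)` gives
`(p-1) ∫ |g|^p (t-d)^(-p) = ∫ (|g|^p)' (t-d)^(1-p)`, and the right-hand side is bounded by
Young's inequality applied to `a = c |g| / (t-d)`, `b = |g'|` with `c = (p-1)/p`; this choice
of `c` is what makes the constant sharp.
-/

open Filter Topology Set Function

theorem integrable_of_continuousOn_of_support_subset {X E : Type*} [TopologicalSpace X]
    [T2Space X] [MeasurableSpace X] [OpensMeasurableSpace X] {μ : Measure X}
    [IsFiniteMeasureOnCompacts μ] [NormedAddCommGroup E] {f : X → E} {K U : Set X}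
    (hK : IsCompact K) (hU : IsOpen U) (hKU : K ⊆ U) (hf : ContinuousOn f U)
    (hfK : support f ⊆ K) : Integrable f μ := by
  have hfK' : tsupport f ⊆ K := closure_minimal hfK hK.isClosed
  exact (hf.continuous_of_tsupport_subset hU (hfK'.trans hKU)).integrable_of_hasCompactSupport
    (hK.of_isClosed_subset (isClosed_tsupport f) hfK')

theorem rpow_sub_one_mul_le {p a b : ℝ} (hp : 1 < p) (ha : 0 ≤ a) (hb : 0 ≤ b) :
    a ^ (p - 1) * b ≤ (p - 1) / p * a ^ p + b ^ p / p := by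
  have h := young_inequality_of_nonneg (rpow_nonneg ha (p - 1)) hb
    (Real.HolderConjugate.conjExponent hp).symm
  rw [← rpow_mul ha, Real.conjExponent, mul_div_cancel₀ _ (sub_pos.2 hp).ne'] at h
  refine h.trans_eq ?_
  field_simp

theorem abs_rpow_le_sq_add_sq_rpow {p : ℝ} (hp : 0 ≤ p) (x y : ℝ) :
    |y| ^ p ≤ (x ^ 2 + y ^ 2) ^ (p / 2) :=
  calc |y| ^ p = √(y ^ 2) ^ p := by rw [sqrt_sq_eq_abs]
    _ ≤ √(x ^ 2 + y ^ 2) ^ p := by gcongr; linarith [sq_nonneg x]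
    _ = (x ^ 2 + y ^ 2) ^ (p / 2) := by
      rw [sqrt_eq_rpow, ← rpow_mul (by positivity)]; ring_nf

theorem abs_deriv_abs_rpow_comp {p : ℝ} (hp : 1 < p) {g : ℝ → ℝ} {t : ℝ}
    (hg : DifferentiableAt ℝ g t) :
    |deriv (fun s => |g s| ^ p) t| = p * |g t| ^ (p - 1) * |deriv g t| := by
  have h : HasDerivAt (fun s => |g s| ^ p) (p * |g t| ^ (p - 2) * g t * deriv g t) t :=
    (hasDerivAt_abs_rpow (g t) hp).comp t hg.hasDerivAt
  rw [h.deriv, abs_mul, abs_mul, abs_mul, abs_of_pos (by linarith : 0 < p),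
    abs_of_nonneg (rpow_nonneg (abs_nonneg _) _), mul_assoc p,
    ← rpow_add_one' (abs_nonneg _) (by linarith)]
  ring_nf

section HalfLine

variable {d : ℝ}

theorem continuousOn_sub_rpow_Ioi (β : ℝ) : ContinuousOn (fun t : ℝ => (t - d) ^ β) (Ioi d) :=
  fun _ ht => ((continuousAt_id.sub continuousAt_const).rpow_const
    (Or.inl (sub_pos.2 ht).ne')).continuousWithinAt

theorem integrable_sub_rpow_mul {β : ℝ} {h : ℝ → ℝ} {K : Set ℝ} (hK : IsCompact K)
    (hKd : K ⊆ Ioi d) (hh : Continuous h) (hhK : support h ⊆ K) :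
    Integrable fun t => (t - d) ^ β * h t :=
  integrable_of_continuousOn_of_support_subset hK isOpen_Ioi hKd
    ((continuousOn_sub_rpow_Ioi β).mul hh.continuousOn)
    ((support_mul_subset_right _ _).trans hhK)

theorem integral_sub_rpow_mul_deriv {α : ℝ} {u : ℝ → ℝ} (hu : ContDiff ℝ 1 u)
    (huc : HasCompactSupport u) (hud : tsupport u ⊆ Ioi d) :
    ∫ t, (t - d) ^ α * deriv u t = -α * ∫ t, (t - d) ^ (α - 1) * u t := by
  have hdu : support (deriv u) ⊆ tsupport u := support_deriv_subset
  have hI₁ : Integrable fun t => (t - d) ^ (α - 1) * u t :=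
    integrable_sub_rpow_mul huc hud hu.continuous (subset_tsupport u)
  have hI₂ : Integrable fun t => (t - d) ^ α * deriv u t :=
    integrable_sub_rpow_mul huc hud (hu.continuous_deriv le_rfl) hdu
  have hderiv : ∀ t, HasDerivAt (fun t => (t - d) ^ α * u t)
      (α * ((t - d) ^ (α - 1) * u t) + (t - d) ^ α * deriv u t) t := by
    intro t
    by_cases ht : t ∈ tsupport u
    · have hw : HasDerivAt (fun t : ℝ => (t - d) ^ α) (α * (t - d) ^ (α - 1)) t := by
        simpa using ((hasDerivAt_id t).sub_const d).rpow_const (p := α)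
          (Or.inl (sub_pos.2 (hud ht)).ne')
      exact (hw.mul (hu.differentiable one_ne_zero t).hasDerivAt).congr_deriv (by ring)
    · have hu0 : u =ᶠ[𝓝 t] 0 := notMem_tsupport_iff_eventuallyEq.mp ht
      have hdu0 : deriv u t = 0 := notMem_support.mp fun h => ht (hdu h)
      rw [hu0.eq_of_nhds, hdu0]
      simpa using (hasDerivAt_const t (0 : ℝ)).congr_of_eventuallyEq
        (hu0.mono fun s hs => by simp [hs])
  have hFTC := integral_eq_zero_of_hasDerivAt_of_integrable hderiv (hI₁.const_mul α |>.add hI₂)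
    (integrable_sub_rpow_mul huc hud hu.continuous (subset_tsupport u))
  rw [integral_add (hI₁.const_mul α) hI₂, integral_const_mul] at hFTC
  linarith

theorem integral_div_abs_sub_rpow {p : ℝ} {h : ℝ → ℝ} (hh : support h ⊆ Ioi d) :
    ∫ t, h t / |t - d| ^ p = ∫ t, (t - d) ^ (-p) * h t := by
  refine integral_congr_ae (Eventually.of_forall fun t => ?_)
  by_cases ht : h t = 0
  · simp [ht]
  have htd : 0 < t - d := sub_pos.2 (hh ht)
  simp only [abs_of_pos htd, rpow_neg htd.le]
  ring

theorem young_hardy_pointwise {p c : ℝ} (hp : 1 < p) (hc : 0 ≤ c) {g : ℝ → ℝ}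
    (hg : Differentiable ℝ g) (hgd : tsupport g ⊆ Ioi d) (t : ℝ) :
    c ^ (p - 1) * ((t - d) ^ (1 - p) * deriv (fun s => |g s| ^ p) t) ≤
      (p - 1) * (c ^ p * ((t - d) ^ (-p) * |g t| ^ p)) + |deriv g t| ^ p := by
  have hderiv := abs_deriv_abs_rpow_comp hp (hg t)
  by_cases hgt : g t = 0
  · rw [hgt, abs_zero, zero_rpow (by linarith), mul_zero, zero_mul, abs_eq_zero] at hderiv
    rw [hderiv, hgt, abs_zero, zero_rpow (by linarith)]
    simp only [mul_zero, zero_add]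
    positivity
  have htd : 0 < t - d := sub_pos.2 (hgd (subset_tsupport g hgt))
  set a := c * |g t| * (t - d)⁻¹
  have hap : ∀ r : ℝ, a ^ r = c ^ r * |g t| ^ r * (t - d) ^ (-r) := fun r => by
    rw [mul_rpow (by positivity) (by positivity), mul_rpow hc (abs_nonneg _),
      inv_rpow htd.le, rpow_neg htd.le]
  calc c ^ (p - 1) * ((t - d) ^ (1 - p) * deriv (fun s => |g s| ^ p) t)
      ≤ c ^ (p - 1) * ((t - d) ^ (1 - p) * |deriv (fun s => |g s| ^ p) t|) := by
        gcongr; exact le_abs_self _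
    _ = p * (a ^ (p - 1) * |deriv g t|) := by rw [hderiv, hap, neg_sub]; ring
    _ ≤ p * ((p - 1) / p * a ^ p + |deriv g t| ^ p / p) := by
        gcongr; exact rpow_sub_one_mul_le hp (by positivity) (abs_nonneg _)
    _ = (p - 1) * (c ^ p * ((t - d) ^ (-p) * |g t| ^ p)) + |deriv g t| ^ p := by
        rw [hap]; field_simp

theorem hardy_inequality_Ioi {p : ℝ} (hp : 1 < p) {g : ℝ → ℝ} (hg : ContDiff ℝ 1 g)
    (hgc : HasCompactSupport g) (hgd : tsupport g ⊆ Ioi d) :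
    ((p - 1) / p) ^ p * ∫ t, |g t| ^ p / |t - d| ^ p ≤ ∫ t, |deriv g t| ^ p := by
  have hp₀ : 0 < p := by linarith
  set c := (p - 1) / p with hc_def
  set u : ℝ → ℝ := fun t => |g t| ^ p
  have hu : ContDiff ℝ 1 u := (contDiff_norm_rpow hp).comp hg
  have hu0 : (fun x : ℝ => |x| ^ p) 0 = 0 := by simp [zero_rpow hp₀.ne']
  have hud : tsupport u ⊆ Ioi d :=
    (tsupport_comp_subset (g := fun x : ℝ => |x| ^ p) hu0 g).trans hgd
  have huc : HasCompactSupport u := hgc.comp_left (g := fun x : ℝ => |x| ^ p) hu0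
  set I := ∫ t, (t - d) ^ (-p) * u t
  set J := ∫ t, |deriv g t| ^ p
  have hIu : Integrable fun t => (t - d) ^ (-p) * u t :=
    integrable_sub_rpow_mul huc hud hu.continuous (subset_tsupport u)
  have hKu : Integrable fun t => (t - d) ^ (1 - p) * deriv u t :=
    integrable_sub_rpow_mul huc hud (hu.continuous_deriv le_rfl) support_deriv_subset
  have hJu : Integrable fun t => |deriv g t| ^ p :=
    ((hg.continuous_deriv le_rfl).abs.rpow_const fun _ => Or.inr hp₀.le
      ).integrable_of_hasCompactSupport (hgc.deriv.comp_left (g := fun x : ℝ => |x| ^ p) hu0)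
  have hK : ∫ t, (t - d) ^ (1 - p) * deriv u t = (p - 1) * I := by
    have := integral_sub_rpow_mul_deriv (α := 1 - p) hu huc hud
    rwa [show 1 - p - 1 = -p by ring, neg_sub] at this
  have hmono : ∫ t, c ^ (p - 1) * ((t - d) ^ (1 - p) * deriv u t) ≤
      ∫ t, ((p - 1) * (c ^ p * ((t - d) ^ (-p) * u t)) + |deriv g t| ^ p) :=
    integral_mono (hKu.const_mul _) (((hIu.const_mul _).const_mul _).add hJu)
      (young_hardy_pointwise hp (by positivity) (hg.differentiable one_ne_zero) hgd)
  rw [integral_const_mul, hK, integral_add ((hIu.const_mul _).const_mul _) hJu,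
    integral_const_mul, integral_const_mul, ← mul_assoc] at hmono
  change c ^ (p - 1) * (p - 1) * I ≤ (p - 1) * (c ^ p * I) + J at hmono
  have hcp : c ^ (p - 1) * (p - 1) = p * c ^ p := by
    have hp₁ : p - 1 ≠ 0 := by linarith
    rw [rpow_sub_one (div_ne_zero hp₁ hp₀.ne'), hc_def]
    field_simp
  rw [hcp] at hmono
  rw [integral_div_abs_sub_rpow (h := u) ((subset_tsupport u).trans hud)]
  linarith

end HalfLine

section FinTwo

theorem hasDerivAt_vecCons_snd (s t : ℝ) :
    HasDerivAt (fun t : ℝ => (![s, t] : Fin 2 → ℝ)) ![0, 1] t := by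
  refine hasDerivAt_pi.mpr fun i => ?_
  fin_cases i
  · simpa using hasDerivAt_const t s
  · simpa using hasDerivAt_id' t

theorem contDiff_vecCons_snd (s : ℝ) :
    ContDiff ℝ 1 (fun t : ℝ => (![s, t] : Fin 2 → ℝ)) :=
  contDiff_pi.2 fun i => by fin_cases i <;> simp [contDiff_const, contDiff_fun_id]

theorem isClosedEmbedding_vecCons_snd (s : ℝ) :
    IsClosedEmbedding (fun t : ℝ => (![s, t] : Fin 2 → ℝ)) := by
  convert isClosedEmbedding_update (![s, 0] : Fin 2 → ℝ) 1 using 1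
  funext t i
  fin_cases i <;> simp

theorem measurePreserving_vecCons_two :
    MeasurePreserving (fun z : ℝ × ℝ => (![z.1, z.2] : Fin 2 → ℝ)) :=
  (volume_preserving_finTwoArrow ℝ).symm

theorem MeasureTheory.Integrable.comp_vecCons_two {G : (Fin 2 → ℝ) → ℝ}
    (hG : Integrable G) :
    Integrable (fun z : ℝ × ℝ => G ![z.1, z.2]) (volume.prod volume) :=
  (measurePreserving_vecCons_two.integrable_comp_emb
    MeasurableEquiv.finTwoArrow.symm.measurableEmbedding).mpr hG

theorem integral_fin_two_arrow {G : (Fin 2 → ℝ) → ℝ} (hG : Integrable G) :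
    ∫ x, G x = ∫ s, ∫ t, G ![s, t] := by
  rw [← integral_prod _ hG.comp_vecCons_two, ← Measure.volume_eq_prod]
  exact (measurePreserving_vecCons_two.integral_comp
    MeasurableEquiv.finTwoArrow.symm.measurableEmbedding G).symm

end FinTwo

section GrushinPlane

variable {f : (Fin 2 → ℝ) → ℝ} {p : ℝ}

theorem continuous_X1G (hf : ContDiff ℝ 1 f) : Continuous (X1G f) :=
  (hf.continuous_fderiv one_ne_zero).clm_apply continuous_const

theorem continuous_X2G (hf : ContDiff ℝ 1 f) : Continuous (X2G f) :=
  (hf.continuous_fderiv one_ne_zero).clm_apply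
    (continuous_pi fun i => by fin_cases i <;> simp [continuous_const, continuous_apply])

theorem X1G_eq_zero_of_notMem_tsupport {x : Fin 2 → ℝ} (hx : x ∉ tsupport f) :
    X1G f x = 0 := by
  simp [X1G, fderiv_of_notMem_tsupport ℝ hx]

theorem X2G_eq_zero_of_notMem_tsupport {x : Fin 2 → ℝ} (hx : x ∉ tsupport f) :
    X2G f x = 0 := by
  simp [X2G, fderiv_of_notMem_tsupport ℝ hx]

theorem X2G_vecCons {s t : ℝ} (hf : DifferentiableAt ℝ f ![s, t]) :
    X2G f ![s, t] = s * deriv (fun t => f ![s, t]) t := by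
  have hs : (![0, s] : Fin 2 → ℝ) = s • ![0, 1] := by
    funext i; fin_cases i <;> simp
  have h : HasDerivAt (fun t => f ![s, t]) (fderiv ℝ f ![s, t] ![0, 1]) t :=
    hf.hasFDerivAt.comp_hasDerivAt t (hasDerivAt_vecCons_snd s t)
  rw [h.deriv, X2G, Matrix.cons_val_zero, hs, map_smul, smul_eq_mul]

theorem integrable_sq_X1G_add_sq_X2G_rpow (hf : ContDiff ℝ 1 f) (hfc : HasCompactSupport f)
    (hp : 0 < p) : Integrable fun x => (X1G f x ^ 2 + X2G f x ^ 2) ^ p :=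
  integrable_of_continuousOn_of_support_subset hfc isOpen_univ (subset_univ _)
    ((((continuous_X1G hf).pow 2).add ((continuous_X2G hf).pow 2)).rpow_const
      fun _ => Or.inr hp.le).continuousOn
    (support_subset_iff'.2 fun x hx => by
      simp [X1G_eq_zero_of_notMem_tsupport hx, X2G_eq_zero_of_notMem_tsupport hx, zero_rpow hp.ne'])

theorem integrable_abs_X2G_rpow (hf : ContDiff ℝ 1 f) (hfc : HasCompactSupport f) (hp : 0 < p) :
    Integrable fun x => |X2G f x| ^ p :=
  integrable_of_continuousOn_of_support_subset hfc isOpen_univ (subset_univ _)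
    ((continuous_X2G hf).abs.rpow_const fun _ => Or.inr hp.le).continuousOn
    (support_subset_iff'.2 fun x hx => by
      simp [X2G_eq_zero_of_notMem_tsupport hx, zero_rpow hp.ne'])

theorem integrable_abs_rpow_div_abs_sub_rpow_mul {d : ℝ} (hf : Continuous f)
    (hfc : HasCompactSupport f) (hfd : tsupport f ⊆ {x | x 1 > d}) (hp : 0 < p) :
    Integrable fun x : Fin 2 → ℝ => |x 0| ^ p / |x 1 - d| ^ p * |f x| ^ p :=
  integrable_of_continuousOn_of_support_subset hfc
    (isOpen_lt continuous_const (continuous_apply 1)) hfd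
    ((((continuous_apply 0).abs.rpow_const fun _ => Or.inr hp.le).continuousOn.div
      (((continuous_apply 1).sub continuous_const).abs.rpow_const
        fun _ => Or.inr hp.le).continuousOn
      fun x hx => (rpow_pos_of_pos (abs_pos.2 (sub_pos.2 hx).ne') p).ne').mul
      (hf.abs.rpow_const fun _ => Or.inr hp.le).continuousOn)
    (support_subset_iff'.2 fun x hx => by
      simp [image_eq_zero_of_notMem_tsupport hx, zero_rpow hp.ne'])

theorem hardy_inequality_slice {d : ℝ} (hp : 1 < p) (hf : ContDiff ℝ 1 f)
    (hfc : HasCompactSupport f) (hfd : tsupport f ⊆ {x | x 1 > d}) (s : ℝ) :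
    ((p - 1) / p) ^ p * ∫ t, |s| ^ p / |t - d| ^ p * |f ![s, t]| ^ p ≤
      ∫ t, |X2G f ![s, t]| ^ p := by
  set g : ℝ → ℝ := fun t => f ![s, t]
  have hemb := isClosedEmbedding_vecCons_snd s
  have hgd : tsupport g ⊆ Ioi d :=
    (tsupport_comp_subset_preimage f hemb.continuous).trans fun _ ht => hfd ht
  have hardy := hardy_inequality_Ioi (g := g) hp (hf.comp (contDiff_vecCons_snd s))
    (hfc.comp_isClosedEmbedding hemb) hgd
  calc ((p - 1) / p) ^ p * ∫ t, |s| ^ p / |t - d| ^ p * |f ![s, t]| ^ p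
      = |s| ^ p * (((p - 1) / p) ^ p * ∫ t, |g t| ^ p / |t - d| ^ p) := by
        simp_rw [← integral_const_mul]; congr 1; funext t; ring
    _ ≤ |s| ^ p * ∫ t, |deriv g t| ^ p := by gcongr
    _ = ∫ t, |X2G f ![s, t]| ^ p := by
        rw [← integral_const_mul]
        congr 1; funext t
        rw [X2G_vecCons (hf.differentiable one_ne_zero _), abs_mul,
          mul_rpow (abs_nonneg _) (abs_nonneg _)]

end GrushinPlane

/-- the sharp Hardy inequality on the half-space `{x₂ > d}` of
the Grushin plane. -/
theorem stmt_8 (d : ℝ) (p : ℝ) (hp : 1 < p)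
    (f : (Fin 2 → ℝ) → ℝ)
    (hf : ContDiff ℝ (⊤ : ℕ∞) f) (hfc : HasCompactSupport f)
    (hfs : tsupport f ⊆ {x : Fin 2 → ℝ | x 1 > d}) :
    ∫ x in {x : Fin 2 → ℝ | x 1 > d},
        ((X1G f x) ^ 2 + (X2G f x) ^ 2) ^ (p / 2) ≥
      ((p - 1) / p) ^ p *
        ∫ x in {x : Fin 2 → ℝ | x 1 > d},
          |x 0| ^ p / |x 1 - d| ^ p * |f x| ^ p := by
  have hp₀ : 0 < p := by linarith
  have hf₁ : ContDiff ℝ 1 f := hf.of_le (by exact_mod_cast le_top)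
  have hΩ : ∀ x ∉ {x : Fin 2 → ℝ | x 1 > d}, x ∉ tsupport f := fun x hx h => hx (hfs h)
  have hX2 := integrable_abs_X2G_rpow hf₁ hfc hp₀
  have hweight := integrable_abs_rpow_div_abs_sub_rpow_mul hf₁.continuous hfc hfs hp₀
  rw [ge_iff_le, setIntegral_eq_integral_of_forall_compl_eq_zero fun x hx => by
      simp [image_eq_zero_of_notMem_tsupport (hΩ x hx), zero_rpow hp₀.ne'],
    setIntegral_eq_integral_of_forall_compl_eq_zero fun x hx => by
      simp [X1G_eq_zero_of_notMem_tsupport (hΩ x hx), X2G_eq_zero_of_notMem_tsupport (hΩ x hx),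
        zero_rpow (half_pos hp₀).ne']]
  calc ((p - 1) / p) ^ p * ∫ x, |x 0| ^ p / |x 1 - d| ^ p * |f x| ^ p
      = ∫ s, ((p - 1) / p) ^ p * ∫ t, |s| ^ p / |t - d| ^ p * |f ![s, t]| ^ p := by
        rw [integral_fin_two_arrow hweight, integral_const_mul]; rfl
    _ ≤ ∫ s, ∫ t, |X2G f ![s, t]| ^ p :=
        integral_mono (hweight.comp_vecCons_two.integral_prod_left.const_mul _)
          hX2.comp_vecCons_two.integral_prod_left (hardy_inequality_slice hp hf₁ hfc hfs)
    _ = ∫ x, |X2G f x| ^ p := (integral_fin_two_arrow hX2).symm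
    _ ≤ ∫ x, (X1G f x ^ 2 + X2G f x ^ 2) ^ (p / 2) :=
        integral_mono hX2 (integrable_sq_X1G_add_sq_X2G_rpow hf₁ hfc (half_pos hp₀))
          fun x => abs_rpow_le_sq_add_sq_rpow hp₀.le _ _
end

section
/- On ℝ³ with the Heisenberg horizontal gradient ∇_H f = (X₁f, X₂f), where X₁f(x) = ∂f/∂x₁ + 2x₂ ∂f/∂x₃ and X₂f(x) = ∂f/∂x₂ − 2x₁ ∂f/∂x₃, let n = (n₁,n₂,n₃) ∈ ℝ³ be a unit vector, d ∈ ℝ, and let Ω⁺ = {x ∈ ℝ³ : x₁n₁ + x₂n₂ + x₃n₃ > d}. Then for every p > 1 and every f ∈ C₀^∞(Ω⁺): ∫_{Ω⁺} |∇_H f(x)|^p dx ≥ ((p−1)/p)^p ∫_{Ω⁺} ( ((n₁ + 2x₂n₃)² + (n₂ − 2x₁n₃)²)^{p/2} / (x₁n₁ + x₂n₂ + x₃n₃ − d)^p ) |f(x)|^p dx. -/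
open MeasureTheory Real

/-- The Heisenberg vector field `X₁ f = ∂f/∂x₁ + 2x₂ ∂f/∂x₃` on `ℝ³`. -/
noncomputable def X1H (f : (Fin 3 → ℝ) → ℝ) (x : Fin 3 → ℝ) : ℝ :=
  fderiv ℝ f x ![1, 0, 2 * x 1]

/-- The Heisenberg vector field `X₂ f = ∂f/∂x₂ − 2x₁ ∂f/∂x₃` on `ℝ³`. -/
noncomputable def X2H (f : (Fin 3 → ℝ) → ℝ) (x : Fin 3 → ℝ) : ℝ :=
  fderiv ℝ f x ![0, 1, -2 * x 0]

/-!
For every horizontal vector field `V` that is `C¹` on `Ω⁺`, integrating `div_H (V |f|^p)` and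
bounding `V · ∇_H |f|^p` by Cauchy–Schwarz and Young's inequality gives
`∫ |∇_H f|^p ≥ ∫ (-div_H V - (p-1) |V|^{p/(p-1)}) |f|^p`; this only uses that `X₁` and `X₂` are
divergence free. Take `V = λ |∇_H u|^{p-2} u^{1-p} ∇_H u` with `u = ⟨x,n⟩ - d`. Since
`∇_H u = (n₁ + 2x₂n₃, n₂ - 2x₁n₃)` has zero horizontal divergence and `∇_H |∇_H u|²` is orthogonal
to `∇_H u`, one gets `-div_H V = λ (p-1) |∇_H u|^p / u^p`, and `λ = ((p-1)/p)^{p-1}` turns the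
weight into `((p-1)/p)^p |∇_H u|^p / u^p`. As `∇_H u` vanishes on a vertical line, `|∇_H u|^{p-2}`
is replaced by `(|∇_H u|² + ε)^{(p-2)/2}` and `ε → 0` by dominated convergence.
-/

open Filter Topology

section Support

theorem ContDiffOn.contDiff_of_tsupport_subset {E F : Type*} [NormedAddCommGroup E]
    [NormedSpace ℝ E] [NormedAddCommGroup F] [NormedSpace ℝ F] {n : WithTop ℕ∞} {f : E → F}
    {U : Set E} (hf : ContDiffOn ℝ n f U) (hU : IsOpen U) (hfU : tsupport f ⊆ U) :
    ContDiff ℝ n f := by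
  refine contDiff_iff_contDiffAt.2 fun x => ?_
  by_cases hx : x ∈ tsupport f
  · exact hf.contDiffAt (hU.mem_nhds (hfU hx))
  · exact contDiffAt_const.congr_of_eventuallyEq (notMem_tsupport_iff_eventuallyEq.1 hx)

theorem tsupport_abs_rpow_subset {X : Type*} [TopologicalSpace X] {f : X → ℝ} {p : ℝ}
    (hp : p ≠ 0) : tsupport (fun x => |f x| ^ p) ⊆ tsupport f :=
  closure_mono fun x hx h0 => hx (by simp [h0, hp])

theorem HasCompactSupport.mul_abs_rpow {X : Type*} [TopologicalSpace X] {f : X → ℝ}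
    (hf : HasCompactSupport f) {p : ℝ} (hp : p ≠ 0) (g : X → ℝ) :
    HasCompactSupport fun x => g x * |f x| ^ p :=
  hf.mono fun x hx h0 => hx (by simp [h0, hp])

theorem tsupport_fderiv_apply_field_subset {E : Type*} [NormedAddCommGroup E] [NormedSpace ℝ E]
    (k : E → ℝ) (Ξ : E → E) : tsupport (fun x => fderiv ℝ k x (Ξ x)) ⊆ tsupport k :=
  closure_minimal (fun x hx => support_fderiv_subset ℝ fun h0 => hx (by simp [h0]))
    (isClosed_tsupport k)

theorem fderiv_mul_apply_of_tsupport_subset {E : Type*} [NormedAddCommGroup E]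
    [NormedSpace ℝ E] {g h : E → ℝ} {U : Set E} (hg : DifferentiableOn ℝ g U) (hU : IsOpen U)
    (hh : Differentiable ℝ h) (hhU : tsupport h ⊆ U) (x v : E) :
    fderiv ℝ (fun y => g y * h y) x v = fderiv ℝ g x v * h x + g x * fderiv ℝ h x v := by
  by_cases hx : x ∈ U
  · rw [fderiv_fun_mul (hg.differentiableAt (hU.mem_nhds hx)) (hh x)]
    simp only [add_apply, smul_apply, smul_eq_mul]
    ring
  · have hxh : x ∉ tsupport h := fun h' => hx (hhU h')
    have hxgh : x ∉ tsupport fun y => g y * h y := fun h' => hxh (tsupport_mul_subset_right h')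
    simp [fderiv_of_notMem_tsupport ℝ hxh, fderiv_of_notMem_tsupport ℝ hxgh,
      image_eq_zero_of_notMem_tsupport hxh]

theorem fderiv_mul_abs_rpow_apply {E : Type*} [NormedAddCommGroup E] [NormedSpace ℝ E]
    {g f : E → ℝ} {U : Set E} (hg : DifferentiableOn ℝ g U) (hU : IsOpen U)
    (hf : Differentiable ℝ f) (hfU : tsupport f ⊆ U) {p : ℝ} (hp : 1 < p) (x v : E) :
    fderiv ℝ (fun y => g y * |f y| ^ p) x v
      = fderiv ℝ g x v * |f x| ^ p + g x * (p * |f x| ^ (p - 2) * f x * fderiv ℝ f x v) := by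
  rw [fderiv_mul_apply_of_tsupport_subset hg hU (by simpa using hf.norm_rpow hp)
    ((tsupport_abs_rpow_subset (by positivity)).trans hfU),
    show fderiv ℝ (fun y => |f y| ^ p) x = _ from
      ((hasDerivAt_abs_rpow (f x) hp).comp_hasFDerivAt x (hf x).hasFDerivAt).fderiv]
  simp only [smul_apply, smul_eq_mul]

variable {E : Type*} [TopologicalSpace E] [MeasurableSpace E] [OpensMeasurableSpace E]
  {μ : Measure E} [IsFiniteMeasureOnCompacts μ]

theorem integrable_mul_of_continuousOn {g h : E → ℝ} {U : Set E} (hg : ContinuousOn g U)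
    (hU : IsOpen U) (hh : Continuous h) (hhc : HasCompactSupport h) (hhU : tsupport h ⊆ U) :
    Integrable (fun x => g x * h x) μ :=
  ((hg.mul hh.continuousOn).continuous_of_tsupport_subset hU
    (tsupport_mul_subset_right.trans hhU)).integrable_of_hasCompactSupport hhc.mul_left

end Support

section Young

theorem mul_mul_le_sub_one_mul_rpow_add_rpow {p a b : ℝ} (hp : 1 < p) (ha : 0 ≤ a)
    (hb : 0 ≤ b) : p * a * b ≤ (p - 1) * a ^ (p / (p - 1)) + b ^ p := by
  have hpq : (p / (p - 1)).HolderConjugate p :=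
    ((Real.holderConjugate_iff_eq_conjExponent hp).2 rfl).symm
  have h := mul_le_mul_of_nonneg_left (Real.young_inequality_of_nonneg ha hb hpq)
    (by linarith : (0 : ℝ) ≤ p)
  have hp1 : p - 1 ≠ 0 := by linarith
  calc p * a * b ≤ p * (a ^ (p / (p - 1)) / (p / (p - 1)) + b ^ p / p) := by linarith
    _ = (p - 1) * a ^ (p / (p - 1)) + b ^ p := by field_simp

theorem sum_mul_deriv_abs_rpow_le {ι : Type*} [Fintype ι] {p : ℝ} (hp : 1 < p) (t : ℝ)
    (v y : ι → ℝ) :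
    ∑ i, v i * (p * |t| ^ (p - 2) * t * y i)
      ≤ p * (√(∑ i, v i ^ 2) * |t| ^ (p - 1)) * √(∑ i, y i ^ 2) := by
  have hpow : |t| ^ (p - 2) * |t| = |t| ^ (p - 1) := by
    rw [← Real.rpow_add_one' (abs_nonneg t) (by linarith)]
    ring_nf
  have hcs : |∑ i, v i * y i| ≤ √(∑ i, v i ^ 2) * √(∑ i, y i ^ 2) :=
    (Real.abs_le_sqrt (Finset.sum_mul_sq_le_sq_mul_sq _ v y)).trans_eq
      (Real.sqrt_mul (by positivity) _)
  calc ∑ i, v i * (p * |t| ^ (p - 2) * t * y i)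
      = p * |t| ^ (p - 2) * (t * ∑ i, v i * y i) := by
        rw [Finset.mul_sum, Finset.mul_sum]; congr 1; ext i; ring
    _ ≤ p * |t| ^ (p - 2) * (|t| * (√(∑ i, v i ^ 2) * √(∑ i, y i ^ 2))) := by
        refine mul_le_mul_of_nonneg_left ((le_abs_self _).trans ?_) (by positivity)
        exact (abs_mul t _).trans_le (mul_le_mul_of_nonneg_left hcs (abs_nonneg t))
    _ = p * (√(∑ i, v i ^ 2) * |t| ^ (p - 1)) * √(∑ i, y i ^ 2) := by
        rw [← hpow]; ring

theorem sum_mul_deriv_abs_rpow_sub_le {ι : Type*} [Fintype ι] {p : ℝ} (hp : 1 < p) (t : ℝ)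
    (v y : ι → ℝ) :
    ∑ i, v i * (p * |t| ^ (p - 2) * t * y i)
        - (p - 1) * (∑ i, v i ^ 2) ^ (p / (p - 1) / 2) * |t| ^ p
      ≤ (∑ i, y i ^ 2) ^ (p / 2) := by
  have hp1 : 0 < p - 1 := by linarith
  have hA : (√(∑ i, v i ^ 2) * |t| ^ (p - 1)) ^ (p / (p - 1))
      = (∑ i, v i ^ 2) ^ (p / (p - 1) / 2) * |t| ^ p := by
    rw [Real.mul_rpow (by positivity) (by positivity), Real.sqrt_eq_rpow, ← Real.rpow_mul
      (by positivity), ← Real.rpow_mul (abs_nonneg t)]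
    congr 2 <;> field_simp
  have hB : √(∑ i, y i ^ 2) ^ p = (∑ i, y i ^ 2) ^ (p / 2) := by
    rw [Real.sqrt_eq_rpow, ← Real.rpow_mul (by positivity)]
    ring_nf
  have hyoung := mul_mul_le_sub_one_mul_rpow_add_rpow hp
    (by positivity : 0 ≤ √(∑ i, v i ^ 2) * |t| ^ (p - 1)) (Real.sqrt_nonneg (∑ i, y i ^ 2))
  rw [hA, hB] at hyoung
  linarith [sum_mul_deriv_abs_rpow_le hp t v y]

end Young

section DivergenceFree

variable {E : Type*} [NormedAddCommGroup E] [NormedSpace ℝ E] [MeasurableSpace E]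

/-- `Ξ` is divergence free in the weak sense: `∫ Ξ · ∇k = 0` for every `C¹` test function `k`. -/
def DivergenceFree (μ : Measure E) (Ξ : E → E) : Prop :=
  ∀ k : E → ℝ, ContDiff ℝ 1 k → HasCompactSupport k → ∫ x, fderiv ℝ k x (Ξ x) ∂μ = 0

variable [BorelSpace E] {μ : Measure E}

theorem integrable_fderiv_apply [IsFiniteMeasureOnCompacts μ] {k : E → ℝ} (hk : ContDiff ℝ 1 k)
    (hkc : HasCompactSupport k) {Ξ : E → E} (hΞ : Continuous Ξ) :
    Integrable (fun x => fderiv ℝ k x (Ξ x)) μ :=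
  ((hk.continuous_fderiv_apply one_ne_zero).comp
    (continuous_id.prodMk hΞ)).integrable_of_hasCompactSupport
    (hkc.of_isClosed_subset (isClosed_tsupport _) (tsupport_fderiv_apply_field_subset k Ξ))

theorem integral_fderiv_apply_eq_zero [FiniteDimensional ℝ E] [μ.IsAddHaarMeasure]
    {k : E → ℝ} (hk : ContDiff ℝ 1 k) (hkc : HasCompactSupport k) (v : E) :
    ∫ x, fderiv ℝ k x v ∂μ = 0 := by
  have h := integral_mul_fderiv_eq_neg_fderiv_mul_of_integrable (μ := μ) (f := fun _ => (1 : ℝ))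
    (g := k) (v := v) (by simp) (by simpa using integrable_fderiv_apply hk hkc continuous_const)
    (by simpa using hk.continuous.integrable_of_hasCompactSupport hkc)
    (fun x _ => differentiableAt_const 1) (fun x _ => hk.differentiable one_ne_zero x)
  simpa using h

theorem divergenceFree_const_add_smul [FiniteDimensional ℝ E] [μ.IsAddHaarMeasure] {v e : E}
    {c : E → ℝ} (hc : ContDiff ℝ 1 c) (hce : ∀ x, fderiv ℝ c x e = 0) :
    DivergenceFree μ fun x => v + c x • e := by
  intro k hk hkc
  have hck : ContDiff ℝ 1 fun x => c x * k x := hc.mul hk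
  have hsplit : ∀ x, fderiv ℝ k x (v + c x • e)
      = fderiv ℝ k x v + fderiv ℝ (fun y => c y * k y) x e := by
    intro x
    rw [fderiv_fun_mul (hc.differentiable one_ne_zero x) (hk.differentiable one_ne_zero x)]
    simp [hce x]
  simp_rw [hsplit]
  rw [integral_add (integrable_fderiv_apply hk hkc continuous_const)
      (integrable_fderiv_apply hck hkc.mul_left continuous_const),
    integral_fderiv_apply_eq_zero hk hkc, integral_fderiv_apply_eq_zero hck hkc.mul_left, add_zero]

theorem integrable_rpow_sum_sq_fderiv_apply [IsFiniteMeasureOnCompacts μ] {ι : Type*}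
    [Fintype ι] {Ξ : ι → E → E} (hΞc : ∀ i, Continuous (Ξ i)) {k : E → ℝ}
    (hk : ContDiff ℝ 1 k) (hkc : HasCompactSupport k) {p : ℝ} (hp : 0 < p) :
    Integrable (fun x => (∑ i, fderiv ℝ k x (Ξ i x) ^ 2) ^ (p / 2)) μ := by
  refine Continuous.integrable_of_hasCompactSupport ?_ (HasCompactSupport.intro hkc ?_)
  · exact (continuous_finsetSum _ fun i _ => ((hk.continuous_fderiv_apply one_ne_zero).comp
      (continuous_id.prodMk (hΞc i))).pow 2).rpow_const fun x => Or.inr (by positivity)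
  · intro x hx
    simp [fderiv_of_notMem_tsupport ℝ hx, hp.ne']

theorem integral_neg_divergence_sub_mul_abs_rpow_le [IsFiniteMeasureOnCompacts μ] {ι : Type*}
    [Fintype ι] {Ξ : ι → E → E} (hΞ : ∀ i, DivergenceFree μ (Ξ i))
    (hΞc : ∀ i, Continuous (Ξ i)) {p : ℝ} (hp : 1 < p) {U : Set E} (hU : IsOpen U)
    {V : ι → E → ℝ} (hV : ∀ i, ContDiffOn ℝ 1 (V i) U) {f : E → ℝ} (hf : ContDiff ℝ 1 f)
    (hfc : HasCompactSupport f) (hfU : tsupport f ⊆ U) :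
    ∫ x, (-∑ i, fderiv ℝ (V i) x (Ξ i x)
        - (p - 1) * (∑ i, V i x ^ 2) ^ (p / (p - 1) / 2)) * |f x| ^ p ∂μ
      ≤ ∫ x, (∑ i, fderiv ℝ f x (Ξ i x) ^ 2) ^ (p / 2) ∂μ := by
  have hp0 : p ≠ 0 := by positivity
  set φ : E → ℝ := fun x => |f x| ^ p
  have hφ : ContDiff ℝ 1 φ := by simpa using hf.norm_rpow hp
  have hφU : tsupport φ ⊆ U := (tsupport_abs_rpow_subset hp0).trans hfU
  have hφc : HasCompactSupport φ := by simpa using hfc.mul_abs_rpow hp0 1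
  set L : E → ℝ := fun x => (-∑ i, fderiv ℝ (V i) x (Ξ i x)
      - (p - 1) * (∑ i, V i x ^ 2) ^ (p / (p - 1) / 2)) * φ x
  set D : ι → E → ℝ := fun i x => fderiv ℝ (fun y => V i y * φ y) x (Ξ i x)
  have hVφ : ∀ i, ContDiff ℝ 1 fun x => V i x * φ x := fun i =>
    ((hV i).mul hφ.contDiffOn).contDiff_of_tsupport_subset hU
      (tsupport_mul_subset_right.trans hφU)
  have hL : Integrable L μ := by
    refine integrable_mul_of_continuousOn (((continuousOn_finsetSum _ fun i _ =>
      ((hV i).continuousOn_fderiv_of_isOpen hU le_rfl).clm_apply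
        (hΞc i).continuousOn).neg).sub (continuousOn_const.mul ?_)) hU hφ.continuous hφc hφU
    exact (continuousOn_finsetSum _ fun i _ => ((hV i).continuousOn).pow 2).rpow_const
      fun x _ => Or.inr (by positivity)
  have hD : ∀ i, Integrable (D i) μ := fun i =>
    integrable_fderiv_apply (hVφ i) hφc.mul_left (hΞc i)
  -- Adding `∑ i, D i`, whose integral vanishes, turns `L` into the left side of the pointwise
  -- bound `sum_mul_deriv_abs_rpow_sub_le`.
  have hpt : ∀ x, L x + ∑ i, D i x ≤ (∑ i, fderiv ℝ f x (Ξ i x) ^ 2) ^ (p / 2) := by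
    intro x
    have := sum_mul_deriv_abs_rpow_sub_le hp (f x) (fun i => V i x)
      (fun i => fderiv ℝ f x (Ξ i x))
    simp only [L, D, φ, fderiv_mul_abs_rpow_apply ((hV _).differentiableOn one_ne_zero) hU
      (hf.differentiable one_ne_zero) hfU hp, Finset.sum_add_distrib, ← Finset.sum_mul]
    linarith
  calc ∫ x, L x ∂μ = ∫ x, L x ∂μ + ∑ i, ∫ x, D i x ∂μ := by
        simp [D, fun i => hΞ i _ (hVφ i) hφc.mul_left]
    _ = ∫ x, (L x + ∑ i, D i x) ∂μ := by
        rw [integral_add hL (integrable_finsetSum _ fun i _ => hD i),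
          integral_finsetSum _ fun i _ => hD i]
    _ ≤ _ := integral_mono (hL.add (integrable_finsetSum _ fun i _ => hD i))
        (integrable_rpow_sum_sq_fderiv_apply hΞc hf hfc (by positivity)) hpt

end DivergenceFree

section Regularization

theorem rpow_add_mul_rpow_le {w ε s σ : ℝ} (hw : 0 ≤ w) (hε : 0 < ε) (hε1 : ε ≤ 1)
    (hσ : 0 < σ) : (w + ε) ^ s * w ^ σ ≤ (w + 1) ^ s * w ^ σ + w ^ (s + σ) := by
  rcases le_or_gt 0 s with hs | hs
  · have := Real.rpow_le_rpow (by positivity) (by linarith : w + ε ≤ w + 1) hs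
    nlinarith [Real.rpow_nonneg hw σ, Real.rpow_nonneg hw (s + σ)]
  rcases hw.eq_or_lt with rfl | hw
  · simp [Real.zero_rpow hσ.ne', Real.rpow_nonneg]
  · have := Real.rpow_le_rpow_of_nonpos hw (by linarith : w ≤ w + ε) hs.le
    rw [Real.rpow_add hw]
    nlinarith [Real.rpow_nonneg (by positivity : 0 ≤ w + 1) s, Real.rpow_nonneg hw.le σ]

variable {X : Type*} [TopologicalSpace X] [MeasurableSpace X] [OpensMeasurableSpace X]
  {μ : Measure X} [IsFiniteMeasureOnCompacts μ] {w r : X → ℝ}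

theorem integrable_rpow_add_mul_rpow_mul (hw : Continuous w) (hw0 : ∀ x, 0 ≤ w x)
    (hr : Continuous r) (hrc : HasCompactSupport r) {s σ ε : ℝ} (hσ : 0 ≤ σ) (hε : 0 < ε) :
    Integrable (fun x => (w x + ε) ^ s * w x ^ σ * r x) μ := by
  refine Continuous.integrable_of_hasCompactSupport ?_ hrc.mul_left
  exact (((hw.add continuous_const).rpow_const fun x =>
    Or.inl (show w x + ε ≠ 0 by linarith [hw0 x])).mul (hw.rpow_const fun _ => Or.inr hσ)).mul hr

theorem tendsto_integral_rpow_add_mul_rpow_mul (hw : Continuous w) (hw0 : ∀ x, 0 ≤ w x)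
    (hr : Continuous r) (hrc : HasCompactSupport r) {s σ : ℝ} (hσ : 0 < σ) (hsσ : 0 < s + σ) :
    Tendsto (fun ε => ∫ x, (w x + ε) ^ s * w x ^ σ * r x ∂μ) (𝓝[>] 0)
      (𝓝 (∫ x, w x ^ (s + σ) * r x ∂μ)) := by
  refine tendsto_integral_filter_of_dominated_convergence
    (fun x => ((w x + 1) ^ s * w x ^ σ + w x ^ (s + σ)) * |r x|) ?_ ?_ ?_ ?_
  · filter_upwards [self_mem_nhdsWithin] with ε hε
    exact (integrable_rpow_add_mul_rpow_mul hw hw0 hr hrc hσ.le hε).aestronglyMeasurable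
  · filter_upwards [Ioc_mem_nhdsGT one_pos] with ε hε
    refine ae_of_all _ fun x => ?_
    rw [norm_mul, Real.norm_of_nonneg (by have := hw0 x; have := hε.1; positivity)]
    exact mul_le_mul_of_nonneg_right (rpow_add_mul_rpow_le (hw0 x) hε.1 hε.2 hσ) (abs_nonneg _)
  · refine Continuous.integrable_of_hasCompactSupport ?_ hrc.abs.mul_left
    exact ((((hw.add continuous_const).rpow_const fun x =>
      Or.inl (show w x + 1 ≠ 0 by linarith [hw0 x])).mul (hw.rpow_const fun _ => Or.inr hσ.le)).add
      (hw.rpow_const fun _ => Or.inr hsσ.le)).mul hr.abs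
  · refine ae_of_all _ fun x => ?_
    rcases (hw0 x).eq_or_lt with h0 | h0
    · simp [← h0, Real.zero_rpow hσ.ne', Real.zero_rpow hsσ.ne']
    · rw [Real.rpow_add h0]
      have : ContinuousAt (fun ε => (w x + ε) ^ s) 0 :=
        (continuousAt_const.add continuousAt_id).rpow_const (Or.inl (by simpa using h0.ne'))
      simpa using ((this.tendsto.mono_left nhdsWithin_le_nhds).mul_const (w x ^ σ)).mul_const (r x)

end Regularization

section Heisenberg

def heisenbergX₁ (x : Fin 3 → ℝ) : Fin 3 → ℝ := ![1, 0, 2 * x 1]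

def heisenbergX₂ (x : Fin 3 → ℝ) : Fin 3 → ℝ := ![0, 1, -2 * x 0]

theorem continuous_heisenbergX₁ : Continuous heisenbergX₁ := by
  unfold heisenbergX₁; fun_prop

theorem continuous_heisenbergX₂ : Continuous heisenbergX₂ := by
  unfold heisenbergX₂; fun_prop

theorem divergenceFree_heisenbergX₁ : DivergenceFree volume heisenbergX₁ := by
  have h : heisenbergX₁ = fun x => ![1, 0, 0] + (2 * x 1) • ![0, 0, 1] := by
    funext x i; fin_cases i <;> simp [heisenbergX₁]
  rw [h]
  refine divergenceFree_const_add_smul (by fun_prop) fun x => ?_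
  rw [((hasFDerivAt_apply 1 x).const_mul 2).fderiv]
  simp

theorem divergenceFree_heisenbergX₂ : DivergenceFree volume heisenbergX₂ := by
  have h : heisenbergX₂ = fun x => ![0, 1, 0] + (-2 * x 0) • ![0, 0, 1] := by
    funext x i; fin_cases i <;> simp [heisenbergX₂]
  rw [h]
  refine divergenceFree_const_add_smul (by fun_prop) fun x => ?_
  rw [((hasFDerivAt_apply 0 x).const_mul (-2)).fderiv]
  simp

end Heisenberg

section HalfSpace

variable (n : Fin 3 → ℝ) (d : ℝ)

noncomputable def halfSpaceDist (x : Fin 3 → ℝ) : ℝ := x 0 * n 0 + x 1 * n 1 + x 2 * n 2 - d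

/-- `X₁` of `halfSpaceDist n d`. -/
noncomputable def hGradDist₁ (x : Fin 3 → ℝ) : ℝ := n 0 + 2 * x 1 * n 2

/-- `X₂` of `halfSpaceDist n d`. -/
noncomputable def hGradDist₂ (x : Fin 3 → ℝ) : ℝ := n 1 - 2 * x 0 * n 2

noncomputable def hGradDistSq (x : Fin 3 → ℝ) : ℝ := hGradDist₁ n x ^ 2 + hGradDist₂ n x ^ 2

noncomputable def hardyWeight (p c ε : ℝ) (x : Fin 3 → ℝ) : ℝ :=
  c * (hGradDistSq n x + ε) ^ ((p - 2) / 2) * halfSpaceDist n d x ^ (1 - p)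

noncomputable def hardyField (p c ε : ℝ) : Fin 2 → (Fin 3 → ℝ) → ℝ :=
  ![fun x => hardyWeight n d p c ε x * hGradDist₁ n x,
    fun x => hardyWeight n d p c ε x * hGradDist₂ n x]

variable {n d}

theorem differentiable_halfSpaceDist : Differentiable ℝ (halfSpaceDist n d) := by
  unfold halfSpaceDist; fun_prop

theorem differentiable_hGradDist₁ : Differentiable ℝ (hGradDist₁ n) := by
  unfold hGradDist₁; fun_prop

theorem differentiable_hGradDist₂ : Differentiable ℝ (hGradDist₂ n) := by
  unfold hGradDist₂; fun_prop

theorem continuous_hGradDistSq : Continuous (hGradDistSq n) := by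
  unfold hGradDistSq
  exact (differentiable_hGradDist₁.pow 2 |>.add (differentiable_hGradDist₂.pow 2)).continuous

theorem hGradDistSq_nonneg (x : Fin 3 → ℝ) : 0 ≤ hGradDistSq n x := by
  unfold hGradDistSq; positivity

theorem isOpen_setOf_halfSpaceDist_pos : IsOpen {x | 0 < halfSpaceDist n d x} :=
  isOpen_lt continuous_const differentiable_halfSpaceDist.continuous

theorem fderiv_halfSpaceDist_apply (x v : Fin 3 → ℝ) :
    fderiv ℝ (halfSpaceDist n d) x v = n 0 * v 0 + n 1 * v 1 + n 2 * v 2 := by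
  unfold halfSpaceDist
  rw [((((hasFDerivAt_apply 0 x).mul_const (n 0)).fun_add
    ((hasFDerivAt_apply 1 x).mul_const (n 1))).fun_add
    ((hasFDerivAt_apply 2 x).mul_const (n 2))).sub_const d |>.fderiv]
  simp

theorem fderiv_hGradDist₁_apply (x v : Fin 3 → ℝ) :
    fderiv ℝ (hGradDist₁ n) x v = n 2 * (2 * v 1) := by
  unfold hGradDist₁
  rw [(((hasFDerivAt_apply 1 x).const_mul 2).mul_const (n 2)).const_add (n 0) |>.fderiv]
  simp

theorem fderiv_hGradDist₂_apply (x v : Fin 3 → ℝ) :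
    fderiv ℝ (hGradDist₂ n) x v = -(n 2 * (2 * v 0)) := by
  unfold hGradDist₂
  rw [(((hasFDerivAt_apply 0 x).const_mul 2).mul_const (n 2)).const_sub (n 1) |>.fderiv]
  simp

theorem divergence_hardyField {p c ε : ℝ} (hε : 0 < ε) {x : Fin 3 → ℝ}
    (hx : 0 < halfSpaceDist n d x) :
    fderiv ℝ (hardyField n d p c ε 0) x (heisenbergX₁ x)
        + fderiv ℝ (hardyField n d p c ε 1) x (heisenbergX₂ x)
      = c * (1 - p) * (hGradDistSq n x + ε) ^ ((p - 2) / 2) * hGradDistSq n x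
          * halfSpaceDist n d x ^ (-p) := by
  have hw : 0 < hGradDistSq n x + ε := by unfold hGradDistSq; positivity
  have ha := (differentiable_hGradDist₁ (n := n) x).hasFDerivAt
  have hb := (differentiable_hGradDist₂ (n := n) x).hasFDerivAt
  have hG := ((((ha.pow 2).fun_add (hb.pow 2)).add_const ε).rpow_const (p := (p - 2) / 2)
    (Or.inl hw.ne') |>.const_mul c).fun_mul
    ((differentiable_halfSpaceDist x).hasFDerivAt.rpow_const (p := 1 - p) (Or.inl hx.ne'))
  simp only [hardyField, hardyWeight, hGradDistSq, Matrix.cons_val_zero, Matrix.cons_val_one]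
  rw [(hG.fun_mul ha).fderiv, (hG.fun_mul hb).fderiv]
  simp only [add_apply, smul_apply, smul_eq_mul, heisenbergX₁, heisenbergX₂,
    fderiv_halfSpaceDist_apply, fderiv_hGradDist₁_apply, fderiv_hGradDist₂_apply,
    show 1 - p - 1 = -p by ring, Matrix.cons_val_zero, Matrix.cons_val_one, Matrix.cons_val]
  -- The weight's derivative drops out: with `(a, b) = ∇_H u`, `X₁a + X₂b = 0` and
  -- `a X₁(a² + b²) + b X₂(a² + b²) = 0`.
  simp only [hGradDist₁, hGradDist₂]
  ring

theorem contDiffOn_hardyField {p c ε : ℝ} (hε : 0 < ε) (i : Fin 2) :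
    ContDiffOn ℝ 1 (hardyField n d p c ε i) {x | 0 < halfSpaceDist n d x} := by
  have hw : ContDiff ℝ 1 fun x => (hGradDistSq n x + ε) ^ ((p - 2) / 2) :=
    ContDiff.rpow_const_of_ne (by unfold hGradDistSq hGradDist₁ hGradDist₂; fun_prop)
      fun x => by linarith [hGradDistSq_nonneg (n := n) x]
  have hu : ContDiffOn ℝ 1 (fun x => halfSpaceDist n d x ^ (1 - p))
      {x | 0 < halfSpaceDist n d x} :=
    ContDiffOn.rpow_const_of_ne (by unfold halfSpaceDist; fun_prop) fun x hx => ne_of_gt hx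
  have hG : ContDiffOn ℝ 1 (hardyWeight n d p c ε) {x | 0 < halfSpaceDist n d x} :=
    (contDiffOn_const.mul hw.contDiffOn).mul hu
  fin_cases i
  · exact hG.mul (by unfold hGradDist₁; fun_prop)
  · exact hG.mul (by unfold hGradDist₂; fun_prop)

theorem sum_sq_hardyField_rpow {p c ε : ℝ} (hp : 1 < p) (hc : 0 ≤ c) (hε : 0 < ε)
    {x : Fin 3 → ℝ} (hx : 0 < halfSpaceDist n d x) :
    (∑ i, hardyField n d p c ε i x ^ 2) ^ (p / (p - 1) / 2)
      = c ^ (p / (p - 1)) * (hGradDistSq n x + ε) ^ ((p - 2) / 2 * (p / (p - 1)))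
          * hGradDistSq n x ^ (p / (p - 1) / 2) * halfSpaceDist n d x ^ (-p) := by
  have hp1 : p - 1 ≠ 0 := by linarith
  have hsum : ∑ i, hardyField n d p c ε i x ^ 2 = hardyWeight n d p c ε x ^ 2 * hGradDistSq n x := by
    simp only [Fin.sum_univ_two, hardyField, hGradDistSq, Matrix.cons_val_zero,
      Matrix.cons_val_one]
    ring
  have hw := hGradDistSq_nonneg (n := n) x
  have hG : 0 ≤ hardyWeight n d p c ε x := by unfold hardyWeight; positivity
  rw [hsum, Real.mul_rpow (by positivity) hw, ← Real.rpow_natCast, ← Real.rpow_mul hG,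
    show ((2 : ℕ) : ℝ) * (p / (p - 1) / 2) = p / (p - 1) by push_cast; field_simp]
  unfold hardyWeight
  rw [Real.mul_rpow (by positivity) (by positivity), Real.mul_rpow hc (by positivity),
    ← Real.rpow_mul (by positivity), ← Real.rpow_mul hx.le,
    show (1 - p) * (p / (p - 1)) = -p by field_simp; ring]
  ring

theorem continuous_rpow_neg_mul_abs_rpow {p : ℝ} (hp : 0 < p) {f : (Fin 3 → ℝ) → ℝ}
    (hf : Continuous f) (hfU : tsupport f ⊆ {x | 0 < halfSpaceDist n d x}) :
    Continuous fun x => halfSpaceDist n d x ^ (-p) * |f x| ^ p := by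
  refine ContinuousOn.continuous_of_tsupport_subset ?_ isOpen_setOf_halfSpaceDist_pos
    (tsupport_mul_subset_right.trans ((tsupport_abs_rpow_subset hp.ne').trans hfU))
  exact (differentiable_halfSpaceDist.continuous.continuousOn.rpow_const fun x hx =>
    Or.inl (ne_of_gt hx)).mul (hf.abs.rpow_const fun _ => Or.inr hp.le).continuousOn

theorem hardy_halfSpace_regularized {p c ε : ℝ} (hp : 1 < p) (hc : 0 ≤ c) (hε : 0 < ε)
    {f : (Fin 3 → ℝ) → ℝ} (hf : ContDiff ℝ 1 f) (hfc : HasCompactSupport f)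
    (hfU : tsupport f ⊆ {x | 0 < halfSpaceDist n d x}) :
    (p - 1) * c * (∫ x, (hGradDistSq n x + ε) ^ ((p - 2) / 2) * hGradDistSq n x ^ (1 : ℝ)
        * (halfSpaceDist n d x ^ (-p) * |f x| ^ p))
      - (p - 1) * c ^ (p / (p - 1)) * (∫ x, (hGradDistSq n x + ε) ^ ((p - 2) / 2 * (p / (p - 1)))
        * hGradDistSq n x ^ (p / (p - 1) / 2) * (halfSpaceDist n d x ^ (-p) * |f x| ^ p))
      ≤ ∫ x, (X1H f x ^ 2 + X2H f x ^ 2) ^ (p / 2) := by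
  have hp0 : 0 < p := by linarith
  have hp1 : 0 < p - 1 := by linarith
  have hr := continuous_rpow_neg_mul_abs_rpow hp0 hf.continuous hfU
  have hrc := hfc.mul_abs_rpow hp0.ne' fun x => halfSpaceDist n d x ^ (-p)
  have hI₁ := integrable_rpow_add_mul_rpow_mul (μ := volume) (continuous_hGradDistSq (n := n))
    hGradDistSq_nonneg hr hrc (s := (p - 2) / 2) (σ := 1) zero_le_one hε
  have hI₂ := integrable_rpow_add_mul_rpow_mul (μ := volume) (continuous_hGradDistSq (n := n))
    hGradDistSq_nonneg hr hrc (s := (p - 2) / 2 * (p / (p - 1))) (σ := p / (p - 1) / 2)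
    (by positivity) hε
  have H := integral_neg_divergence_sub_mul_abs_rpow_le (μ := volume)
    (Ξ := ![heisenbergX₁, heisenbergX₂]) (V := hardyField n d p c ε)
    (Fin.forall_fin_two.2 ⟨divergenceFree_heisenbergX₁, divergenceFree_heisenbergX₂⟩)
    (Fin.forall_fin_two.2 ⟨continuous_heisenbergX₁, continuous_heisenbergX₂⟩)
    hp isOpen_setOf_halfSpaceDist_pos (contDiffOn_hardyField hε) hf hfc hfU
  rw [← integral_const_mul, ← integral_const_mul,
    ← integral_sub (hI₁.const_mul _) (hI₂.const_mul _)]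
  convert H using 1
  · refine integral_congr_ae (ae_of_all _ fun x => ?_)
    by_cases hx : 0 < halfSpaceDist n d x
    · simp only
      rw [sum_sq_hardyField_rpow hp hc hε hx, Fin.sum_univ_two]
      simp only [Matrix.cons_val_zero, Matrix.cons_val_one]
      rw [divergence_hardyField hε hx, Real.rpow_one]
      ring
    · have hfx : f x = 0 := image_eq_zero_of_notMem_tsupport fun h => hx (hfU h)
      simp [hfx, hp0.ne']
  · simp only [Fin.sum_univ_two, Matrix.cons_val_zero, Matrix.cons_val_one]
    rfl

theorem sub_one_mul_rpow_sub_rpow_eq {p : ℝ} (hp : 1 < p) :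
    (p - 1) * ((p - 1) / p) ^ (p - 1) - (p - 1) * (((p - 1) / p) ^ (p - 1)) ^ (p / (p - 1))
      = ((p - 1) / p) ^ p := by
  have hp1 : p - 1 ≠ 0 := by linarith
  have hr : 0 < (p - 1) / p := div_pos (by linarith) (by linarith)
  rw [← Real.rpow_mul hr.le, show (p - 1) * (p / (p - 1)) = p by field_simp,
    Real.rpow_sub_one hr.ne']
  field_simp
  ring

theorem hardy_halfSpace {p : ℝ} (hp : 1 < p) {f : (Fin 3 → ℝ) → ℝ} (hf : ContDiff ℝ 1 f)
    (hfc : HasCompactSupport f) (hfU : tsupport f ⊆ {x | 0 < halfSpaceDist n d x}) :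
    ((p - 1) / p) ^ p * ∫ x, hGradDistSq n x ^ (p / 2) * (halfSpaceDist n d x ^ (-p) * |f x| ^ p)
      ≤ ∫ x, (X1H f x ^ 2 + X2H f x ^ 2) ^ (p / 2) := by
  have hp0 : 0 < p := by linarith
  have hp1 : 0 < p - 1 := by linarith
  have hr := continuous_rpow_neg_mul_abs_rpow hp0 hf.continuous hfU
  have hrc := hfc.mul_abs_rpow hp0.ne' fun x => halfSpaceDist n d x ^ (-p)
  have he : (p - 2) / 2 * (p / (p - 1)) + p / (p - 1) / 2 = p / 2 := by field_simp; ring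
  have hlim₁ := tendsto_integral_rpow_add_mul_rpow_mul (μ := volume)
    (continuous_hGradDistSq (n := n)) hGradDistSq_nonneg hr hrc (s := (p - 2) / 2) one_pos
    (by linarith)
  have hlim₂ := tendsto_integral_rpow_add_mul_rpow_mul (μ := volume)
    (continuous_hGradDistSq (n := n)) hGradDistSq_nonneg hr hrc (s := (p - 2) / 2 * (p / (p - 1)))
    (σ := p / (p - 1) / 2) (by positivity) (by rw [he]; positivity)
  rw [show (p - 2) / 2 + 1 = p / 2 by ring] at hlim₁
  rw [he] at hlim₂
  have h := le_of_tendsto ((hlim₁.const_mul ((p - 1) * ((p - 1) / p) ^ (p - 1))).sub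
    (hlim₂.const_mul ((p - 1) * (((p - 1) / p) ^ (p - 1)) ^ (p / (p - 1)))))
    (eventually_nhdsWithin_of_forall fun ε hε =>
      hardy_halfSpace_regularized hp (by positivity) hε hf hfc hfU)
  rwa [← sub_mul, sub_one_mul_rpow_sub_rpow_eq hp] at h

end HalfSpace

theorem stmt_9_general (n : Fin 3 → ℝ) (d : ℝ)
    (p : ℝ) (hp : 1 < p)
    (f : (Fin 3 → ℝ) → ℝ)
    (hf : ContDiff ℝ (⊤ : ℕ∞) f) (hfc : HasCompactSupport f)
    (hfs : tsupport f ⊆ {x : Fin 3 → ℝ | x 0 * n 0 + x 1 * n 1 + x 2 * n 2 > d}) :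
    ∫ x in {x : Fin 3 → ℝ | x 0 * n 0 + x 1 * n 1 + x 2 * n 2 > d},
        ((X1H f x) ^ 2 + (X2H f x) ^ 2) ^ (p / 2) ≥
      ((p - 1) / p) ^ p *
        ∫ x in {x : Fin 3 → ℝ | x 0 * n 0 + x 1 * n 1 + x 2 * n 2 > d},
          ((n 0 + 2 * x 1 * n 2) ^ 2 + (n 1 - 2 * x 0 * n 2) ^ 2) ^ (p / 2)
            / (x 0 * n 0 + x 1 * n 1 + x 2 * n 2 - d) ^ p * |f x| ^ p := by
  have hp0 : p ≠ 0 := by positivity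
  have hU : {x : Fin 3 → ℝ | x 0 * n 0 + x 1 * n 1 + x 2 * n 2 > d}
      = {x | 0 < halfSpaceDist n d x} := by
    ext x; simp [halfSpaceDist]
  rw [hU] at hfs ⊢
  have hfU : ∀ x ∉ {x | 0 < halfSpaceDist n d x}, x ∉ tsupport f := fun x hx h => hx (hfs h)
  have hL : ∫ x in {x | 0 < halfSpaceDist n d x}, (X1H f x ^ 2 + X2H f x ^ 2) ^ (p / 2)
      = ∫ x, (X1H f x ^ 2 + X2H f x ^ 2) ^ (p / 2) :=
    setIntegral_eq_integral_of_forall_compl_eq_zero fun x hx => by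
      simp [X1H, X2H, fderiv_of_notMem_tsupport ℝ (hfU x hx), hp0]
  have hR : ∫ x in {x | 0 < halfSpaceDist n d x},
        ((n 0 + 2 * x 1 * n 2) ^ 2 + (n 1 - 2 * x 0 * n 2) ^ 2) ^ (p / 2)
          / (x 0 * n 0 + x 1 * n 1 + x 2 * n 2 - d) ^ p * |f x| ^ p
      = ∫ x, hGradDistSq n x ^ (p / 2) * (halfSpaceDist n d x ^ (-p) * |f x| ^ p) := by
    rw [setIntegral_eq_integral_of_forall_compl_eq_zero fun x hx => by
      simp [image_eq_zero_of_notMem_tsupport (hfU x hx), hp0]]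
    refine integral_congr_ae (ae_of_all _ fun x => ?_)
    by_cases hx : 0 < halfSpaceDist n d x
    · simp only [Real.rpow_neg hx.le]
      simp only [hGradDistSq, hGradDist₁, hGradDist₂, halfSpaceDist]
      ring
    · simp [image_eq_zero_of_notMem_tsupport (hfU x hx), hp0]
  rw [ge_iff_le, hL, hR]
  exact hardy_halfSpace hp (hf.of_le (by exact_mod_cast le_top)) hfc hfs

/-- the sharp geometric Hardy inequality on half-spaces
`Ω⁺ = {⟨x,n⟩ > d}` in the Heisenberg group. -/
theorem stmt_9 (n : Fin 3 → ℝ) (hn : n 0 ^ 2 + n 1 ^ 2 + n 2 ^ 2 = 1) (d : ℝ)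
    (p : ℝ) (hp : 1 < p)
    (f : (Fin 3 → ℝ) → ℝ)
    (hf : ContDiff ℝ (⊤ : ℕ∞) f) (hfc : HasCompactSupport f)
    (hfs : tsupport f ⊆ {x : Fin 3 → ℝ | x 0 * n 0 + x 1 * n 1 + x 2 * n 2 > d}) :
    ∫ x in {x : Fin 3 → ℝ | x 0 * n 0 + x 1 * n 1 + x 2 * n 2 > d},
        ((X1H f x) ^ 2 + (X2H f x) ^ 2) ^ (p / 2) ≥
      ((p - 1) / p) ^ p *
        ∫ x in {x : Fin 3 → ℝ | x 0 * n 0 + x 1 * n 1 + x 2 * n 2 > d},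
          ((n 0 + 2 * x 1 * n 2) ^ 2 + (n 1 - 2 * x 0 * n 2) ^ 2) ^ (p / 2)
            / (x 0 * n 0 + x 1 * n 1 + x 2 * n 2 - d) ^ p * |f x| ^ p :=
  stmt_9_general n d p hp f hf hfc hfs
end

section
/- On ℝ³ with the Heisenberg horizontal gradient ∇_H f = (X₁f, X₂f), where X₁f(x) = ∂f/∂x₁ + 2x₂ ∂f/∂x₃ and X₂f(x) = ∂f/∂x₂ − 2x₁ ∂f/∂x₃, let n = (n₁,n₂,n₃) ∈ ℝ³ be a unit vector, d ∈ ℝ, and let Ω⁺ = {x ∈ ℝ³ : x₁n₁ + x₂n₂ + x₃n₃ > d}. Then for every p > 1, every γ ∈ ℝ, and every f ∈ C₀^∞(Ω⁺): ∫_{Ω⁺} |∇_H f(x)|^p dx ≥ −(p−1)(|γ|^{p/(p−1)} + γ) ∫_{Ω⁺} ( ((n₁ + 2x₂n₃)² + (n₂ − 2x₁n₃)²)^{p/2} / (x₁n₁ + x₂n₂ + x₃n₃ − d)^p ) |f(x)|^p dx. -/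
open MeasureTheory Real

/-!
Let `w = ⟨x, n⟩ - d`. Its horizontal gradient is `∇_H w = (n₁ + 2x₂n₃, n₂ - 2x₁n₃)`, and for every
profile `φ` the field `φ(|∇_H w|²) ∇_H w` is horizontally divergence free. Integrating the density
`w^(1-p) |f|^p` against the regularized flux `V_ε = (|∇_H w|² + ε)^((p-2)/2) ∇_H w` therefore gives
`(p - 1) ∫ |∇_H w|² (|∇_H w|² + ε)^((p-2)/2) |f|^p / w^p
  = p ∫ (|∇_H w|² + ε)^((p-2)/2) w^(1-p) |f|^(p-2) f ⟨∇_H w, ∇_H f⟩`.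
Multiplying by `γ` and bounding the right side by Young's inequality
`p X Y ≤ X^p + (p - 1) Y^(p/(p-1))` with `X = |∇_H f|` yields the inequality with a regularized
Hardy weight, and `ε → 0` by dominated convergence.
-/

open Filter Topology Function

section IntegrationByParts

variable {E : Type*} [NormedAddCommGroup E] [NormedSpace ℝ E] [FiniteDimensional ℝ E]
  [MeasurableSpace E] [BorelSpace E] {μ : Measure E} [μ.IsAddHaarMeasure]

theorem integral_mul_fderiv_eq_zero {a G : E → ℝ} {v : E} (ha : Differentiable ℝ a)
    (hav : ∀ x, fderiv ℝ a x v = 0) (hG : ContDiff ℝ 1 G) (hGc : HasCompactSupport G) :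
    ∫ x, a x * fderiv ℝ G x v ∂μ = 0 := by
  have hG' : Continuous (fderiv ℝ G · v) :=
    (hG.continuous_fderiv one_ne_zero).clm_apply continuous_const
  rw [integral_mul_fderiv_eq_neg_fderiv_mul_of_integrable (by simp [hav])
    ((ha.continuous.mul hG').integrable_of_hasCompactSupport (hGc.fderiv_apply (𝕜 := ℝ) v).mul_left)
    ((ha.continuous.mul hG.continuous).integrable_of_hasCompactSupport hGc.mul_left)
    (fun x _ => ha x) (fun x _ => hG.differentiable one_ne_zero x)]
  simp [hav]

/-- A vector field `v₀ + a • v` with `∂ᵥ a = 0` is divergence free. -/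
theorem integral_fderiv_apply_add_smul_eq_zero {a G : E → ℝ} {v₀ v : E}
    (ha : Differentiable ℝ a) (hav : ∀ x, fderiv ℝ a x v = 0) (hG : ContDiff ℝ 1 G)
    (hGc : HasCompactSupport G) :
    ∫ x, fderiv ℝ G x (v₀ + a x • v) ∂μ = 0 := by
  have hG' (w : E) : Continuous (fderiv ℝ G · w) :=
    (hG.continuous_fderiv one_ne_zero).clm_apply continuous_const
  have hi₀ : Integrable (fderiv ℝ G · v₀) μ :=
    (hG' v₀).integrable_of_hasCompactSupport (hGc.fderiv_apply (𝕜 := ℝ) v₀)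
  have hi : Integrable (fun x => a x * fderiv ℝ G x v) μ :=
    (ha.continuous.mul (hG' v)).integrable_of_hasCompactSupport
      (hGc.fderiv_apply (𝕜 := ℝ) v).mul_left
  simp only [map_add, map_smul, smul_eq_mul]
  rw [integral_add hi₀ hi, integral_mul_fderiv_eq_zero ha hav hG hGc, add_zero]
  simpa using integral_mul_fderiv_eq_zero (μ := μ) (v := v₀) (differentiable_const 1)
    (fun x => by simp) hG hGc

end IntegrationByParts

theorem contDiff_of_tsupport {E F : Type*} [NormedAddCommGroup E] [NormedSpace ℝ E]
    [NormedAddCommGroup F] [NormedSpace ℝ F] {u : E → F} {k : WithTop ℕ∞}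
    (hu : ∀ x ∈ tsupport u, ContDiffAt ℝ k u x) : ContDiff ℝ k u :=
  contDiff_iff_contDiffAt.2 fun x => by
    by_cases hx : x ∈ tsupport u
    · exact hu x hx
    · exact contDiffAt_const.congr_of_eventuallyEq (notMem_tsupport_iff_eventuallyEq.1 hx)

theorem neg_mul_inner_le_young {p : ℝ} (hp : 1 < p) (t a₁ a₂ b₁ b₂ : ℝ) :
    -(p * t * (a₁ * b₁ + a₂ * b₂)) ≤
      (b₁ ^ 2 + b₂ ^ 2) ^ (p / 2) +
        (p - 1) * |t| ^ (p / (p - 1)) * (a₁ ^ 2 + a₂ ^ 2) ^ (p / (p - 1) / 2) := by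
  set q := p / (p - 1)
  set A := √(a₁ ^ 2 + a₂ ^ 2)
  set B := √(b₁ ^ 2 + b₂ ^ 2) with hB_def
  have hp₀ : 0 < p := by linarith
  have hcs : |a₁ * b₁ + a₂ * b₂| ≤ A * B := by
    rw [← sqrt_mul (by positivity), ← sqrt_sq_eq_abs]
    exact sqrt_le_sqrt (by nlinarith [sq_nonneg (a₁ * b₂ - a₂ * b₁)])
  have hq : p.HolderConjugate q := Real.HolderConjugate.conjExponent hp
  have hyoung := young_inequality_of_nonneg (a := B) (b := |t| * A) (by positivity)
    (by positivity) hq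
  have hB : B ^ p = (b₁ ^ 2 + b₂ ^ 2) ^ (p / 2) := by
    rw [hB_def, sqrt_eq_rpow, ← rpow_mul (by positivity)]; ring_nf
  have hA : (|t| * A) ^ q = |t| ^ q * (a₁ ^ 2 + a₂ ^ 2) ^ (q / 2) := by
    rw [mul_rpow (abs_nonneg t) (sqrt_nonneg _), sqrt_eq_rpow, ← rpow_mul (by positivity)]
    ring_nf
  have hpq : p / q = p - 1 := by rw [div_div_eq_mul_div, mul_div_cancel_left₀ _ hp₀.ne']
  calc -(p * t * (a₁ * b₁ + a₂ * b₂))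
      ≤ p * |t| * |a₁ * b₁ + a₂ * b₂| :=
        (neg_le_abs _).trans_eq (by rw [abs_mul, abs_mul, abs_of_pos hp₀])
    _ ≤ p * (B * (|t| * A)) := by
        rw [show B * (|t| * A) = |t| * (A * B) by ring, ← mul_assoc]
        gcongr
    _ ≤ p * (B ^ p / p + (|t| * A) ^ q / q) := by gcongr
    _ = (b₁ ^ 2 + b₂ ^ 2) ^ (p / 2) + (p - 1) * |t| ^ q * (a₁ ^ 2 + a₂ ^ 2) ^ (q / 2) := by
        rw [← hB, mul_add, mul_div_cancel₀ _ hp₀.ne', mul_div_assoc', mul_comm p,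
          mul_div_assoc, hpq, hA]
        ring

theorem abs_abs_rpow_sub_two_mul {p : ℝ} (hp : 1 < p) (y : ℝ) :
    |(|y| ^ (p - 2) * y)| = |y| ^ (p - 1) := by
  rcases eq_or_ne y 0 with rfl | hy
  · simp [zero_rpow (by linarith : p - 1 ≠ 0)]
  · rw [abs_mul, abs_of_nonneg (rpow_nonneg (abs_nonneg y) _),
      ← rpow_add_one (abs_ne_zero.2 hy)]
    ring_nf

theorem abs_mul_rpow_conjExponent {p : ℝ} (hp : 1 < p) {s h : ℝ} (hs : 0 ≤ s) (hh : 0 < h)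
    (c y : ℝ) :
    |c * s * (h ^ (1 - p) * (|y| ^ (p - 2) * y))| ^ (p / (p - 1)) =
      |c| ^ (p / (p - 1)) * s ^ (p / (p - 1)) * (|y| ^ p / h ^ p) := by
  have hp1 : p - 1 ≠ 0 := by linarith
  rw [abs_mul, abs_mul, abs_mul, abs_of_nonneg hs, abs_of_pos (rpow_pos_of_pos hh _),
    abs_abs_rpow_sub_two_mul hp, mul_rpow (by positivity) (by positivity),
    mul_rpow (by positivity) (by positivity), mul_rpow (by positivity) (by positivity),
    ← rpow_mul hh.le, ← rpow_mul (abs_nonneg y),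
    show (1 - p) * (p / (p - 1)) = -p by field_simp; ring,
    show (p - 1) * (p / (p - 1)) = p by field_simp, rpow_neg hh.le]
  ring

section Regularization

theorem add_rpow_mul_rpow_le {s ε α β r : ℝ} (hs : 0 ≤ s) (hε : 0 < ε) (hε₁ : ε ≤ 1)
    (hβ : 0 ≤ β) (hr : 0 ≤ r) (hαβ : α + β = r) :
    (s + ε) ^ α * s ^ β ≤ (s + 1) ^ r := by
  have hsε : 0 < s + ε := by linarith
  calc (s + ε) ^ α * s ^ β ≤ (s + ε) ^ α * (s + ε) ^ β := by gcongr; linarith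
    _ = (s + ε) ^ r := by rw [← rpow_add hsε, hαβ]
    _ ≤ (s + 1) ^ r := by gcongr

theorem tendsto_add_rpow_mul_rpow {s α β r : ℝ} (hs : 0 ≤ s) (hβ : 0 < β) (hr : 0 < r)
    (hαβ : α + β = r) :
    Tendsto (fun ε => (s + ε) ^ α * s ^ β) (𝓝[>] 0) (𝓝 (s ^ r)) := by
  rcases hs.eq_or_lt with rfl | hs
  · simp [zero_rpow hβ.ne', zero_rpow hr.ne']
  · have hcont : ContinuousAt (fun ε => (s + ε) ^ α) 0 :=
      (continuousAt_const.add continuousAt_id).rpow_const (Or.inl (by simp [hs.ne']))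
    have hlim := (hcont.tendsto.mono_left (nhdsWithin_le_nhds (s := Set.Ioi 0))).mul_const (s ^ β)
    rwa [add_zero, ← rpow_add hs, hαβ] at hlim

variable {X : Type*} [TopologicalSpace X] [MeasurableSpace X] [OpensMeasurableSpace X]
  {μ : Measure X} [IsFiniteMeasureOnCompacts μ]

theorem tendsto_integral_add_rpow_mul_rpow_mul {g W : X → ℝ} (hg : Continuous g)
    (hg₀ : ∀ x, 0 ≤ g x) (hW : Continuous W) (hWc : HasCompactSupport W) {α β r : ℝ}
    (hβ : 0 < β) (hr : 0 < r) (hαβ : α + β = r) :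
    Tendsto (fun ε => ∫ x, (g x + ε) ^ α * g x ^ β * W x ∂μ) (𝓝[>] 0)
      (𝓝 (∫ x, g x ^ r * W x ∂μ)) := by
  refine tendsto_integral_filter_of_dominated_convergence (fun x => (g x + 1) ^ r * |W x|)
    ?_ ?_ ?_ (ae_of_all _ fun x =>
      (tendsto_add_rpow_mul_rpow (hg₀ x) hβ hr hαβ).mul_const (W x))
  · filter_upwards [self_mem_nhdsWithin] with ε (hε : 0 < ε)
    exact (((hg.add continuous_const).rpow_const fun x =>
      Or.inl (add_pos_of_nonneg_of_pos (hg₀ x) hε).ne').mul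
      (hg.rpow_const fun _ => Or.inr hβ.le)).mul hW |>.aestronglyMeasurable
  · filter_upwards [Ioc_mem_nhdsGT zero_lt_one] with ε ⟨hε, hε₁⟩
    refine ae_of_all _ fun x => ?_
    rw [norm_mul, norm_of_nonneg (by have := hg₀ x; positivity)]
    exact mul_le_mul_of_nonneg_right (add_rpow_mul_rpow_le (hg₀ x) hε hε₁ hβ.le hr.le hαβ)
      (abs_nonneg _)
  · exact (((hg.add continuous_const).rpow_const fun x => Or.inr hr.le).mul
      hW.abs).integrable_of_hasCompactSupport hWc.abs.mul_left

end Regularization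

section HorizontalCalculus

variable {u v G : (Fin 3 → ℝ) → ℝ} {x : Fin 3 → ℝ}

theorem continuous_X1H (hG : ContDiff ℝ 1 G) : Continuous (X1H G) :=
  (hG.continuous_fderiv one_ne_zero).clm_apply (by fun_prop)

theorem continuous_X2H (hG : ContDiff ℝ 1 G) : Continuous (X2H G) :=
  (hG.continuous_fderiv one_ne_zero).clm_apply (by fun_prop)

theorem X1H_of_notMem_tsupport (hx : x ∉ tsupport G) : X1H G x = 0 := by
  simp [X1H, fderiv_of_notMem_tsupport ℝ hx]

theorem X2H_of_notMem_tsupport (hx : x ∉ tsupport G) : X2H G x = 0 := by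
  simp [X2H, fderiv_of_notMem_tsupport ℝ hx]

theorem hasCompactSupport_X1H (hGc : HasCompactSupport G) : HasCompactSupport (X1H G) :=
  HasCompactSupport.intro hGc fun _ => X1H_of_notMem_tsupport

theorem hasCompactSupport_X2H (hGc : HasCompactSupport G) : HasCompactSupport (X2H G) :=
  HasCompactSupport.intro hGc fun _ => X2H_of_notMem_tsupport

theorem integrable_X1H (hG : ContDiff ℝ 1 G) (hGc : HasCompactSupport G) :
    Integrable (X1H G) :=
  (continuous_X1H hG).integrable_of_hasCompactSupport (hasCompactSupport_X1H hGc)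

theorem integrable_X2H (hG : ContDiff ℝ 1 G) (hGc : HasCompactSupport G) :
    Integrable (X2H G) :=
  (continuous_X2H hG).integrable_of_hasCompactSupport (hasCompactSupport_X2H hGc)

theorem X1H_mul (hu : DifferentiableAt ℝ u x) (hv : DifferentiableAt ℝ v x) :
    X1H (fun y => u y * v y) x = X1H u x * v x + u x * X1H v x := by
  simp [X1H, fderiv_fun_mul hu hv]; ring

theorem X2H_mul (hu : DifferentiableAt ℝ u x) (hv : DifferentiableAt ℝ v x) :
    X2H (fun y => u y * v y) x = X2H u x * v x + u x * X2H v x := by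
  simp [X2H, fderiv_fun_mul hu hv]; ring

theorem X1H_comp {φ : ℝ → ℝ} {φ' : ℝ} (hφ : HasDerivAt φ φ' (u x))
    (hu : DifferentiableAt ℝ u x) : X1H (fun y => φ (u y)) x = φ' * X1H u x := by
  have h : HasFDerivAt (fun y => φ (u y)) (φ' • fderiv ℝ u x) x :=
    hφ.comp_hasFDerivAt x hu.hasFDerivAt
  simp [X1H, h.fderiv]

theorem X2H_comp {φ : ℝ → ℝ} {φ' : ℝ} (hφ : HasDerivAt φ φ' (u x))
    (hu : DifferentiableAt ℝ u x) : X2H (fun y => φ (u y)) x = φ' * X2H u x := by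
  have h : HasFDerivAt (fun y => φ (u y)) (φ' • fderiv ℝ u x) x :=
    hφ.comp_hasFDerivAt x hu.hasFDerivAt
  simp [X2H, h.fderiv]

theorem integral_X1H_eq_zero (hG : ContDiff ℝ 1 G) (hGc : HasCompactSupport G) :
    ∫ x, X1H G x = 0 := by
  have hfield (x : Fin 3 → ℝ) : ![1, 0, 2 * x 1] = ![1, 0, 0] + (2 * x 1) • ![0, 0, 1] := by
    ext i; fin_cases i <;> simp
  simp only [X1H, hfield]
  exact integral_fderiv_apply_add_smul_eq_zero (by fun_prop)
    (fun x => by simp (disch := fun_prop) [fderiv_const_mul, fderiv_apply]) hG hGc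

theorem integral_X2H_eq_zero (hG : ContDiff ℝ 1 G) (hGc : HasCompactSupport G) :
    ∫ x, X2H G x = 0 := by
  have hfield (x : Fin 3 → ℝ) : ![0, 1, -2 * x 0] = ![0, 1, 0] + (-2 * x 0) • ![0, 0, 1] := by
    ext i; fin_cases i <;> simp
  simp only [X2H, hfield]
  exact integral_fderiv_apply_add_smul_eq_zero (by fun_prop)
    (fun x => by simp (disch := fun_prop) [fderiv_const_mul, fderiv_apply]) hG hGc

theorem integrable_X1H_mul_add_X2H_mul {V₁ V₂ : (Fin 3 → ℝ) → ℝ} (hu : ContDiff ℝ 1 u)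
    (huc : HasCompactSupport u) (hV₁ : Continuous V₁) (hV₂ : Continuous V₂) :
    Integrable fun x => X1H u x * V₁ x + X2H u x * V₂ x :=
  (((continuous_X1H hu).mul hV₁).integrable_of_hasCompactSupport
      (hasCompactSupport_X1H huc).mul_right).add
    (((continuous_X2H hu).mul hV₂).integrable_of_hasCompactSupport
      (hasCompactSupport_X2H huc).mul_right)

theorem integrable_X1H_sq_add_X2H_sq_rpow {p : ℝ} (hp : 0 < p) (hG : ContDiff ℝ 1 G)
    (hGc : HasCompactSupport G) :
    Integrable fun x => (X1H G x ^ 2 + X2H G x ^ 2) ^ (p / 2) :=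
  ((((continuous_X1H hG).pow 2).add ((continuous_X2H hG).pow 2)).rpow_const
    fun _ => Or.inr (by positivity)).integrable_of_hasCompactSupport
    (HasCompactSupport.intro hGc fun x hx => by
      simp [X1H_of_notMem_tsupport hx, X2H_of_notMem_tsupport hx,
        zero_rpow (by positivity : p / 2 ≠ 0)])

noncomputable def hdiv (V₁ V₂ : (Fin 3 → ℝ) → ℝ) (x : Fin 3 → ℝ) : ℝ :=
  X1H V₁ x + X2H V₂ x

theorem hdiv_mul {V₁ V₂ : (Fin 3 → ℝ) → ℝ} (hu : DifferentiableAt ℝ u x)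
    (hV₁ : DifferentiableAt ℝ V₁ x) (hV₂ : DifferentiableAt ℝ V₂ x) :
    hdiv (fun y => u y * V₁ y) (fun y => u y * V₂ y) x =
      X1H u x * V₁ x + X2H u x * V₂ x + u x * hdiv V₁ V₂ x := by
  rw [hdiv, hdiv, X1H_mul hu hV₁, X2H_mul hu hV₂]; ring

theorem integral_X1H_mul_add_X2H_mul_eq_zero {V₁ V₂ : (Fin 3 → ℝ) → ℝ}
    (hu : ContDiff ℝ 1 u) (huc : HasCompactSupport u) (hV₁ : ContDiff ℝ 1 V₁)
    (hV₂ : ContDiff ℝ 1 V₂) (hV : ∀ x, hdiv V₁ V₂ x = 0) :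
    ∫ x, (X1H u x * V₁ x + X2H u x * V₂ x) = 0 := by
  have hd {w : (Fin 3 → ℝ) → ℝ} (hw : ContDiff ℝ 1 w) : Differentiable ℝ w :=
    hw.differentiable one_ne_zero
  have hpoint (x : Fin 3 → ℝ) : X1H u x * V₁ x + X2H u x * V₂ x =
      X1H (fun y => u y * V₁ y) x + X2H (fun y => u y * V₂ y) x := by
    rw [← hdiv, hdiv_mul (hd hu x) (hd hV₁ x) (hd hV₂ x), hV, mul_zero, add_zero]
  simp only [hpoint]
  rw [integral_add (integrable_X1H (hu.mul hV₁) huc.mul_right)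
      (integrable_X2H (hu.mul hV₂) huc.mul_right),
    integral_X1H_eq_zero (hu.mul hV₁) huc.mul_right,
    integral_X2H_eq_zero (hu.mul hV₂) huc.mul_right, add_zero]

end HorizontalCalculus

namespace HeisenbergHalfSpace

variable (n : Fin 3 → ℝ) (d : ℝ)

def height (x : Fin 3 → ℝ) : ℝ := x 0 * n 0 + x 1 * n 1 + x 2 * n 2 - d

def heightGrad₁ (x : Fin 3 → ℝ) : ℝ := n 0 + 2 * x 1 * n 2

def heightGrad₂ (x : Fin 3 → ℝ) : ℝ := n 1 - 2 * x 0 * n 2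

def heightGradSq (x : Fin 3 → ℝ) : ℝ := heightGrad₁ n x ^ 2 + heightGrad₂ n x ^ 2

theorem contDiff_height {k : WithTop ℕ∞} : ContDiff ℝ k (height n d) := by
  unfold height; fun_prop

theorem contDiff_heightGrad₁ {k : WithTop ℕ∞} : ContDiff ℝ k (heightGrad₁ n) := by
  unfold heightGrad₁; fun_prop

theorem contDiff_heightGrad₂ {k : WithTop ℕ∞} : ContDiff ℝ k (heightGrad₂ n) := by
  unfold heightGrad₂; fun_prop

theorem contDiff_heightGradSq {k : WithTop ℕ∞} : ContDiff ℝ k (heightGradSq n) :=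
  ((contDiff_heightGrad₁ n).pow 2).add ((contDiff_heightGrad₂ n).pow 2)

@[fun_prop] theorem differentiable_height : Differentiable ℝ (height n d) :=
  (contDiff_height n d).differentiable one_ne_zero

@[fun_prop] theorem differentiable_heightGradSq : Differentiable ℝ (heightGradSq n) :=
  (contDiff_heightGradSq n).differentiable one_ne_zero

@[fun_prop] theorem differentiable_heightGrad₁ : Differentiable ℝ (heightGrad₁ n) :=
  (contDiff_heightGrad₁ n).differentiable one_ne_zero

@[fun_prop] theorem differentiable_heightGrad₂ : Differentiable ℝ (heightGrad₂ n) :=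
  (contDiff_heightGrad₂ n).differentiable one_ne_zero

variable {n} {x : Fin 3 → ℝ}

theorem heightGradSq_nonneg : 0 ≤ heightGradSq n x := by unfold heightGradSq; positivity

theorem X1H_height : X1H (height n d) x = heightGrad₁ n x := by
  unfold height heightGrad₁
  simp (disch := fun_prop) [X1H, fderiv_fun_add, fderiv_fun_sub,
    fderiv_mul_const, fderiv_apply]
  ring

theorem X2H_height : X2H (height n d) x = heightGrad₂ n x := by
  unfold height heightGrad₂
  simp (disch := fun_prop) [X2H, fderiv_fun_add, fderiv_fun_sub,
    fderiv_mul_const, fderiv_apply]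
  ring

theorem X1H_heightGradSq : X1H (heightGradSq n) x = -(4 * n 2 * heightGrad₂ n x) := by
  unfold heightGradSq heightGrad₁ heightGrad₂
  simp (disch := fun_prop) [X1H, fderiv_fun_add, fderiv_fun_sub,
    fderiv_mul_const, fderiv_const_mul, fderiv_fun_pow, fderiv_apply]
  ring

theorem X2H_heightGradSq : X2H (heightGradSq n) x = 4 * n 2 * heightGrad₁ n x := by
  unfold heightGradSq heightGrad₁ heightGrad₂
  simp (disch := fun_prop) [X2H, fderiv_fun_add, fderiv_fun_sub,
    fderiv_mul_const, fderiv_const_mul, fderiv_fun_pow, fderiv_apply]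
  ring

theorem X1H_heightGrad₁ : X1H (heightGrad₁ n) x = 0 := by
  unfold heightGrad₁
  simp (disch := fun_prop) [X1H, fderiv_mul_const, fderiv_const_mul, fderiv_apply]

theorem X2H_heightGrad₂ : X2H (heightGrad₂ n) x = 0 := by
  unfold heightGrad₂
  simp (disch := fun_prop) [X2H, fderiv_const_sub, fderiv_mul_const, fderiv_const_mul,
    fderiv_apply]

/-- With `φ s = s ^ ((p - 2) / 2)` this is the vanishing of the `p`-sub-Laplacian of `w`. -/
theorem hdiv_comp_heightGradSq_mul_heightGrad {φ : ℝ → ℝ}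
    (hφ : DifferentiableAt ℝ φ (heightGradSq n x)) :
    hdiv (fun y => φ (heightGradSq n y) * heightGrad₁ n y)
      (fun y => φ (heightGradSq n y) * heightGrad₂ n y) x = 0 := by
  have hφg : DifferentiableAt ℝ (fun y => φ (heightGradSq n y)) x :=
    hφ.comp x (differentiable_heightGradSq n x)
  rw [hdiv, X1H_mul hφg (by fun_prop), X2H_mul hφg (by fun_prop),
    X1H_comp hφ.hasDerivAt (by fun_prop), X2H_comp hφ.hasDerivAt (by fun_prop),
    X1H_heightGradSq, X2H_heightGradSq, X1H_heightGrad₁, X2H_heightGrad₂]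
  ring

variable (n) in
/-- The `ε`-regularization of the `p`-Laplacian flux `|∇_H w|^(p-2) ∇_H w`, which for `p < 2` is
not differentiable where `∇_H w` vanishes. -/
noncomputable def flux₁ (p ε : ℝ) (x : Fin 3 → ℝ) : ℝ :=
  (heightGradSq n x + ε) ^ ((p - 2) / 2) * heightGrad₁ n x

variable (n) in
noncomputable def flux₂ (p ε : ℝ) (x : Fin 3 → ℝ) : ℝ :=
  (heightGradSq n x + ε) ^ ((p - 2) / 2) * heightGrad₂ n x

theorem heightGradSq_add_pos {ε : ℝ} (hε : 0 < ε) : 0 < heightGradSq n x + ε :=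
  add_pos_of_nonneg_of_pos heightGradSq_nonneg hε

theorem hdiv_flux {p ε : ℝ} (hε : 0 < ε) : hdiv (flux₁ n p ε) (flux₂ n p ε) x = 0 :=
  hdiv_comp_heightGradSq_mul_heightGrad
    ((differentiableAt_id.add_const ε).rpow_const (Or.inl (heightGradSq_add_pos hε).ne'))

theorem contDiff_flux₁ {p ε : ℝ} (hε : 0 < ε) : ContDiff ℝ 1 (flux₁ n p ε) :=
  (((contDiff_heightGradSq n).add contDiff_const).rpow_const_of_ne
    fun _ => (heightGradSq_add_pos hε).ne').mul (contDiff_heightGrad₁ n)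

theorem contDiff_flux₂ {p ε : ℝ} (hε : 0 < ε) : ContDiff ℝ 1 (flux₂ n p ε) :=
  (((contDiff_heightGradSq n).add contDiff_const).rpow_const_of_ne
    fun _ => (heightGradSq_add_pos hε).ne').mul (contDiff_heightGrad₂ n)

section Hardy

variable (n : Fin 3 → ℝ) (d p : ℝ) (f : (Fin 3 → ℝ) → ℝ)

noncomputable def potential (x : Fin 3 → ℝ) : ℝ := height n d x ^ (1 - p) * |f x| ^ p

noncomputable def hardyWeight (x : Fin 3 → ℝ) : ℝ := |f x| ^ p / height n d x ^ p

variable {n d p f} {x : Fin 3 → ℝ}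

theorem abs_rpow_of_eq_zero (hp : 0 < p) (hx : f x = 0) : |f x| ^ p = 0 := by
  rw [hx, abs_zero, zero_rpow hp.ne']

theorem support_potential_subset (hp : 0 < p) : support (potential n d p f) ⊆ support f :=
  support_subset_iff'.2 fun _ hx => by
    rw [potential, abs_rpow_of_eq_zero hp (notMem_support.1 hx), mul_zero]

theorem support_hardyWeight_subset (hp : 0 < p) : support (hardyWeight n d p f) ⊆ support f :=
  support_subset_iff'.2 fun _ hx => by
    rw [hardyWeight, abs_rpow_of_eq_zero hp (notMem_support.1 hx), zero_div]

theorem hasCompactSupport_potential (hp : 0 < p) (hfc : HasCompactSupport f) :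
    HasCompactSupport (potential n d p f) :=
  hfc.mono (support_potential_subset hp)

theorem tsupport_potential_subset (hp : 0 < p) : tsupport (potential n d p f) ⊆ tsupport f :=
  closure_mono (support_potential_subset hp)

theorem X1H_potential (hp : 1 < p) (hf : DifferentiableAt ℝ f x) (hx : 0 < height n d x) :
    X1H (potential n d p f) x = (1 - p) * height n d x ^ (-p) * heightGrad₁ n x * |f x| ^ p +
      height n d x ^ (1 - p) * (p * |f x| ^ (p - 2) * f x) * X1H f x := by
  have hpow := hasDerivAt_rpow_const (p := 1 - p) (Or.inl hx.ne')
  have habs := hasDerivAt_abs_rpow (f x) hp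
  change X1H (fun y => height n d y ^ (1 - p) * |f y| ^ p) x = _
  rw [X1H_mul (u := fun y => height n d y ^ (1 - p)) (v := fun y => |f y| ^ p)
      (hpow.differentiableAt.comp x (by fun_prop)) (habs.differentiableAt.comp x hf),
    X1H_comp hpow (by fun_prop), X1H_comp habs hf, X1H_height, sub_sub_cancel_left]
  ring

theorem X2H_potential (hp : 1 < p) (hf : DifferentiableAt ℝ f x) (hx : 0 < height n d x) :
    X2H (potential n d p f) x = (1 - p) * height n d x ^ (-p) * heightGrad₂ n x * |f x| ^ p +
      height n d x ^ (1 - p) * (p * |f x| ^ (p - 2) * f x) * X2H f x := by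
  have hpow := hasDerivAt_rpow_const (p := 1 - p) (Or.inl hx.ne')
  have habs := hasDerivAt_abs_rpow (f x) hp
  change X2H (fun y => height n d y ^ (1 - p) * |f y| ^ p) x = _
  rw [X2H_mul (u := fun y => height n d y ^ (1 - p)) (v := fun y => |f y| ^ p)
      (hpow.differentiableAt.comp x (by fun_prop)) (habs.differentiableAt.comp x hf),
    X2H_comp hpow (by fun_prop), X2H_comp habs hf, X2H_height, sub_sub_cancel_left]
  ring

variable (hp : 1 < p) (hf : ContDiff ℝ 1 f) (hfs : tsupport f ⊆ {x | 0 < height n d x})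
include hp hf hfs

theorem contDiff_potential : ContDiff ℝ 1 (potential n d p f) :=
  contDiff_of_tsupport fun x hx =>
    have hx : 0 < height n d x := hfs (tsupport_potential_subset (by linarith) hx)
    ((contDiff_height n d).contDiffAt.rpow_const_of_ne hx.ne').mul
      ((contDiff_norm_rpow hp).comp hf).contDiffAt

theorem continuous_hardyWeight : Continuous (hardyWeight n d p f) :=
  continuous_of_tsupport fun x hx =>
    have hx : 0 < height n d x :=
      hfs (closure_mono (support_hardyWeight_subset (by linarith)) hx)
    ((continuous_norm.comp hf.continuous).rpow_const
      fun _ => Or.inr (by linarith)).continuousAt.div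
      ((differentiable_height n d).continuous.continuousAt.rpow_const (Or.inl hx.ne'))
      (rpow_pos_of_pos hx p).ne'

theorem X1H_potential_mul_flux_add (ε : ℝ) (x : Fin 3 → ℝ) :
    X1H (potential n d p f) x * flux₁ n p ε x + X2H (potential n d p f) x * flux₂ n p ε x =
      (heightGradSq n x + ε) ^ ((p - 2) / 2) *
        ((1 - p) * heightGradSq n x * hardyWeight n d p f x +
          p * (height n d x ^ (1 - p) * (|f x| ^ (p - 2) * f x)) *
            (heightGrad₁ n x * X1H f x + heightGrad₂ n x * X2H f x)) := by
  by_cases hx : x ∈ tsupport f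
  · have hxpos : 0 < height n d x := hfs hx
    rw [X1H_potential hp (hf.differentiable one_ne_zero x) hxpos,
      X2H_potential hp (hf.differentiable one_ne_zero x) hxpos, flux₁, flux₂, hardyWeight,
      heightGradSq, rpow_neg hxpos.le, div_eq_mul_inv]
    ring
  · have hpot : x ∉ tsupport (potential n d p f) :=
      fun h => hx (tsupport_potential_subset (by linarith) h)
    rw [X1H_of_notMem_tsupport hpot, X2H_of_notMem_tsupport hpot, X1H_of_notMem_tsupport hx,
      X2H_of_notMem_tsupport hx, hardyWeight, image_eq_zero_of_notMem_tsupport hx]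
    simp [zero_rpow (by linarith : p ≠ 0)]

theorem integrable_add_rpow_mul_rpow_mul_hardyWeight (hfc : HasCompactSupport f) {ε a b : ℝ}
    (hε : 0 < ε) (hb : 0 ≤ b) :
    Integrable fun x => (heightGradSq n x + ε) ^ a * heightGradSq n x ^ b * hardyWeight n d p f x :=
  have hg : Continuous (heightGradSq n) := (differentiable_heightGradSq n).continuous
  ((((hg.add continuous_const).rpow_const fun _ => Or.inl (heightGradSq_add_pos hε).ne').mul
    (hg.rpow_const fun _ => Or.inr hb)).mul
    (continuous_hardyWeight hp hf hfs)).integrable_of_hasCompactSupport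
    (hfc.mono (support_hardyWeight_subset (by linarith))).mul_left

theorem regularized_le_horizontal_gradient_rpow {γ ε : ℝ} (hε : 0 < ε) (x : Fin 3 → ℝ) :
    γ * (1 - p) * ((heightGradSq n x + ε) ^ ((p - 2) / 2) * heightGradSq n x *
        hardyWeight n d p f x) -
      (p - 1) * |γ| ^ (p / (p - 1)) * ((heightGradSq n x + ε) ^ ((p - 2) / 2 * (p / (p - 1))) *
        heightGradSq n x ^ (p / (p - 1) / 2) * hardyWeight n d p f x) -
      γ * (X1H (potential n d p f) x * flux₁ n p ε x + X2H (potential n d p f) x * flux₂ n p ε x)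
    ≤ (X1H f x ^ 2 + X2H f x ^ 2) ^ (p / 2) := by
  rw [X1H_potential_mul_flux_add hp hf hfs]
  by_cases hfx : f x = 0
  · simp [hardyWeight, hfx, zero_rpow (by linarith : p ≠ 0)]
    positivity
  · have hx : 0 < height n d x := hfs (subset_tsupport f hfx)
    have hyoung := neg_mul_inner_le_young hp
      (γ * (heightGradSq n x + ε) ^ ((p - 2) / 2) *
        (height n d x ^ (1 - p) * (|f x| ^ (p - 2) * f x)))
      (heightGrad₁ n x) (heightGrad₂ n x) (X1H f x) (X2H f x)
    rw [abs_mul_rpow_conjExponent hp (rpow_nonneg (heightGradSq_add_pos hε).le _) hx,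
      ← rpow_mul (heightGradSq_add_pos hε).le, ← heightGradSq, ← hardyWeight] at hyoung
    linear_combination hyoung

theorem regularized_hardy_inequality (hfc : HasCompactSupport f) (γ : ℝ) {ε : ℝ} (hε : 0 < ε) :
    γ * (1 - p) * (∫ x, (heightGradSq n x + ε) ^ ((p - 2) / 2) * heightGradSq n x *
        hardyWeight n d p f x) -
      (p - 1) * |γ| ^ (p / (p - 1)) * ∫ x, (heightGradSq n x + ε) ^ ((p - 2) / 2 * (p / (p - 1))) *
        heightGradSq n x ^ (p / (p - 1) / 2) * hardyWeight n d p f x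
    ≤ ∫ x, (X1H f x ^ 2 + X2H f x ^ 2) ^ (p / 2) := by
  have hp₀ : 0 < p := by linarith
  have hp₁ : 0 < p - 1 := by linarith
  have hu := contDiff_potential hp hf hfs
  have huc := hasCompactSupport_potential hp₀ hfc (n := n) (d := d)
  have hR := integrable_add_rpow_mul_rpow_mul_hardyWeight hp hf hfs hfc (a := (p - 2) / 2) hε
    zero_le_one
  simp only [rpow_one] at hR
  have hK := integrable_add_rpow_mul_rpow_mul_hardyWeight hp hf hfs hfc
    (a := (p - 2) / 2 * (p / (p - 1))) hε (b := p / (p - 1) / 2) (by positivity)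
  have hP := integrable_X1H_mul_add_X2H_mul hu huc
    (contDiff_flux₁ (n := n) (p := p) hε).continuous
    (contDiff_flux₂ (n := n) (p := p) hε).continuous
  have hpair := integral_X1H_mul_add_X2H_mul_eq_zero hu huc (contDiff_flux₁ (n := n) (p := p) hε)
    (contDiff_flux₂ hε) fun _ => hdiv_flux hε
  have hRK := (hR.const_mul (γ * (1 - p))).sub (hK.const_mul ((p - 1) * |γ| ^ (p / (p - 1))))
  have key := integral_mono (hRK.sub (hP.const_mul γ))
    (integrable_X1H_sq_add_X2H_sq_rpow hp₀ hf hfc)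
    (regularized_le_horizontal_gradient_rpow hp hf hfs hε)
  rw [integral_sub' hRK (hP.const_mul γ), integral_sub' (hR.const_mul _) (hK.const_mul _)] at key
  rw [integral_const_mul, integral_const_mul, integral_const_mul, hpair] at key
  linarith

theorem hardy_inequality (hfc : HasCompactSupport f) (γ : ℝ) :
    -(p - 1) * (|γ| ^ (p / (p - 1)) + γ) * ∫ x, heightGradSq n x ^ (p / 2) * hardyWeight n d p f x
      ≤ ∫ x, (X1H f x ^ 2 + X2H f x ^ 2) ^ (p / 2) := by
  have hp₁ : 0 < p - 1 := by linarith
  have hW := continuous_hardyWeight hp hf hfs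
  have hWc : HasCompactSupport (hardyWeight n d p f) :=
    hfc.mono (support_hardyWeight_subset (by linarith))
  have hg : Continuous (heightGradSq n) := (differentiable_heightGradSq n).continuous
  have hR := tendsto_integral_add_rpow_mul_rpow_mul (μ := volume) hg
    (fun _ => heightGradSq_nonneg) hW hWc one_pos (by positivity)
    (by ring : (p - 2) / 2 + 1 = p / 2)
  have hK := tendsto_integral_add_rpow_mul_rpow_mul (μ := volume) hg
    (fun _ => heightGradSq_nonneg) hW hWc (by positivity) (by positivity)
    (by field_simp; ring : (p - 2) / 2 * (p / (p - 1)) + p / (p - 1) / 2 = p / 2)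
  simp only [rpow_one] at hR
  have hlim := le_of_tendsto ((hR.const_mul (γ * (1 - p))).sub (hK.const_mul _))
    (eventually_nhdsWithin_of_forall fun _ hε => regularized_hardy_inequality hp hf hfs hfc γ hε)
  linear_combination hlim

end Hardy

end HeisenbergHalfSpace

theorem stmt_10_general (n : Fin 3 → ℝ) (d : ℝ)
    (p : ℝ) (hp : 1 < p) (γ : ℝ)
    (f : (Fin 3 → ℝ) → ℝ)
    (hf : ContDiff ℝ (⊤ : ℕ∞) f) (hfc : HasCompactSupport f)
    (hfs : tsupport f ⊆ {x : Fin 3 → ℝ | x 0 * n 0 + x 1 * n 1 + x 2 * n 2 > d}) :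
    ∫ x in {x : Fin 3 → ℝ | x 0 * n 0 + x 1 * n 1 + x 2 * n 2 > d},
        ((X1H f x) ^ 2 + (X2H f x) ^ 2) ^ (p / 2) ≥
      -(p - 1) * (|γ| ^ (p / (p - 1)) + γ) *
        ∫ x in {x : Fin 3 → ℝ | x 0 * n 0 + x 1 * n 1 + x 2 * n 2 > d},
          ((n 0 + 2 * x 1 * n 2) ^ 2 + (n 1 - 2 * x 0 * n 2) ^ 2) ^ (p / 2)
            / (x 0 * n 0 + x 1 * n 1 + x 2 * n 2 - d) ^ p * |f x| ^ p := by
  have hp₀ : 0 < p := by linarith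
  have hnot {x} (hx : x ∉ {x : Fin 3 → ℝ | x 0 * n 0 + x 1 * n 1 + x 2 * n 2 > d}) :
      x ∉ tsupport f := fun h => hx (hfs h)
  rw [setIntegral_eq_integral_of_forall_compl_eq_zero fun x hx => by
      simp [X1H_of_notMem_tsupport (hnot hx), X2H_of_notMem_tsupport (hnot hx),
        zero_rpow (by positivity : p / 2 ≠ 0)],
    setIntegral_eq_integral_of_forall_compl_eq_zero fun x hx => by
      simp [image_eq_zero_of_notMem_tsupport (hnot hx), zero_rpow hp₀.ne']]
  convert HeisenbergHalfSpace.hardy_inequality hp (hf.of_le (by exact_mod_cast le_top))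
    (by simpa [HeisenbergHalfSpace.height] using hfs) hfc γ using 3
  ext x
  simp only [HeisenbergHalfSpace.hardyWeight, HeisenbergHalfSpace.height,
    HeisenbergHalfSpace.heightGradSq, HeisenbergHalfSpace.heightGrad₁,
    HeisenbergHalfSpace.heightGrad₂]
  ring

/-- the γ-parametrized Hardy inequality on half-spaces
`Ω⁺ = {⟨x,n⟩ > d}` in the Heisenberg group. -/
theorem stmt_10 (n : Fin 3 → ℝ) (hn : n 0 ^ 2 + n 1 ^ 2 + n 2 ^ 2 = 1) (d : ℝ)
    (p : ℝ) (hp : 1 < p) (γ : ℝ)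
    (f : (Fin 3 → ℝ) → ℝ)
    (hf : ContDiff ℝ (⊤ : ℕ∞) f) (hfc : HasCompactSupport f)
    (hfs : tsupport f ⊆ {x : Fin 3 → ℝ | x 0 * n 0 + x 1 * n 1 + x 2 * n 2 > d}) :
    ∫ x in {x : Fin 3 → ℝ | x 0 * n 0 + x 1 * n 1 + x 2 * n 2 > d},
        ((X1H f x) ^ 2 + (X2H f x) ^ 2) ^ (p / 2) ≥
      -(p - 1) * (|γ| ^ (p / (p - 1)) + γ) *
        ∫ x in {x : Fin 3 → ℝ | x 0 * n 0 + x 1 * n 1 + x 2 * n 2 > d},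
          ((n 0 + 2 * x 1 * n 2) ^ 2 + (n 1 - 2 * x 0 * n 2) ^ 2) ^ (p / 2)
            / (x 0 * n 0 + x 1 * n 1 + x 2 * n 2 - d) ^ p * |f x| ^ p :=
  stmt_10_general n d p hp γ f hf hfc hfs
end
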